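/- arXiv:1710.02333 — 5 statements merged into one kernel-verified Lean document; each statement's English description precedes it below -/
import Mathlib

section
/- The expected value of the scaled perimeter satisfies E[P_m] = 4p(m − (m−1)p). -/
open MeasureTheory ProbabilityTheory Finset Filter

noncomputable section

/-- The scaled total area `A_{m} = (1/m) ∑_{i,j=1}^m Z_{i,j}` of a binary image `Z`. -/
def areaSum (m : ℕ) (Z : ℕ → ℕ → ℝ) : ℝ :=
  (1 / (m : ℝ)) * ∑ i ∈ Finset.Icc 1 m, ∑ j ∈ Finset.Icc 1 m, Z i j

/-- The scaled perimeter `P_{m} = (1/m) ∑_{i,j=1}^m ψ(i,j)` of a binary image `Z`,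
where `ψ(i,j) = 0` if `Z i j = 0` and `ψ(i,j) = 4 - (Z (i-1) j + Z (i+1) j + Z i (j-1) + Z i (j+1))`
if `Z i j = 1`. -/
def perimSum (m : ℕ) (Z : ℕ → ℕ → ℝ) : ℝ :=
  (1 / (m : ℝ)) * ∑ i ∈ Finset.Icc 1 m, ∑ j ∈ Finset.Icc 1 m,
    (if Z i j = 1 then 4 - (Z (i - 1) j + Z (i + 1) j + Z i (j - 1) + Z i (j + 1)) else 0)

/-- The scaled Euler characteristic `χ_{m} = (1/m) ∑_{i,j=1}^m W_{i,j}` of a binary image `Z`,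
where, with `S = Z i j + Z (i+1) j + Z i (j+1) + Z (i+1) (j+1)`: `W = 1/4` if `S = 1`;
`W = -1/4` if `S = 3`; `W = -1/2` if `S = 2` and one of the two diagonal products is `1`;
and `W = 0` otherwise. -/
def eulerSum (m : ℕ) (Z : ℕ → ℕ → ℝ) : ℝ :=
  (1 / (m : ℝ)) * ∑ i ∈ Finset.Icc 1 m, ∑ j ∈ Finset.Icc 1 m,
    (if Z i j + Z (i + 1) j + Z i (j + 1) + Z (i + 1) (j + 1) = 1 then (1 / 4 : ℝ)
      else if Z i j + Z (i + 1) j + Z i (j + 1) + Z (i + 1) (j + 1) = 3 then -(1 / 4)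
      else if Z i j + Z (i + 1) j + Z i (j + 1) + Z (i + 1) (j + 1) = 2 ∧
          (Z i j * Z (i + 1) (j + 1) = 1 ∨ Z (i + 1) j * Z i (j + 1) = 1) then -(1 / 2)
      else 0)

/-! Each interior `Z i j` is almost surely `0` or `1`, so almost surely
`ψ(i,j) = 4 Z_{i,j} - Σ Z_{i,j} Z_{k,l}` over the four neighbours `(k,l)`. By independence
`E[Z_{i,j} Z_{k,l}] = p²` for a neighbour inside the grid, while it vanishes for a neighbour on the
white border. Hence `E ψ(i,j) = 4p - p² (d i + d j)`, where `d i` counts the neighbours of `i` in the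
path `1, …, m`; since `Σ d = 2(m-1)`, this gives `E[m P_m] = 4pm² - 4p²m(m-1)`. -/

section ZeroOne

variable {Ω : Type*} [MeasurableSpace Ω] {μ : Measure Ω} {X Y : Ω → ℝ}

lemma ae_eq_zero_or_one_of_measure_add_eq_one [IsProbabilityMeasure μ] (hX : Measurable X)
    (h : μ {ω | X ω = 0} + μ {ω | X ω = 1} = 1) : ∀ᵐ ω ∂μ, X ω = 0 ∨ X ω = 1 := by
  have hdisj : Disjoint {ω | X ω = 0} {ω | X ω = 1} :=
    Set.disjoint_left.mpr fun ω h0 h1 => zero_ne_one (h0.symm.trans h1)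
  refine (mem_ae_iff_prob_eq_one ((hX (measurableSet_singleton 0)).union
    (hX (measurableSet_singleton 1)))).mpr <|
    (measure_union hdisj (hX (measurableSet_singleton 1))).trans h

lemma integrable_of_ae_eq_zero_or_one [IsFiniteMeasure μ] (hX : Measurable X)
    (h : ∀ᵐ ω ∂μ, X ω = 0 ∨ X ω = 1) : Integrable X μ :=
  .of_bound hX.aestronglyMeasurable 1 <| by
    filter_upwards [h] with ω hω
    rcases hω with hω | hω <;> simp [hω]

lemma ae_mul_eq_zero_or_one (hX : ∀ᵐ ω ∂μ, X ω = 0 ∨ X ω = 1)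
    (hY : ∀ᵐ ω ∂μ, Y ω = 0 ∨ Y ω = 1) : ∀ᵐ ω ∂μ, X ω * Y ω = 0 ∨ X ω * Y ω = 1 := by
  filter_upwards [hX, hY] with ω hXω hYω
  rcases hXω with h | h <;> rcases hYω with h' | h' <;> simp [h, h']

lemma integral_eq_measureReal_of_ae_eq_zero_or_one (hX : Measurable X)
    (h : ∀ᵐ ω ∂μ, X ω = 0 ∨ X ω = 1) : ∫ ω, X ω ∂μ = μ.real {ω | X ω = 1} := by
  have h1 : MeasurableSet {ω | X ω = 1} := hX (measurableSet_singleton 1)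
  rw [← integral_indicator_one h1]
  refine integral_congr_ae ?_
  filter_upwards [h] with ω hω
  rcases hω with hω | hω <;> simp [Set.indicator, hω]

end ZeroOne

lemma ite_eq_one_eq_mul {x : ℝ} (hx : x = 0 ∨ x = 1) (y : ℝ) :
    (if x = 1 then y else 0) = x * y := by
  rcases hx with rfl | rfl <;> simp

def pathDegree (m i : ℕ) : ℝ :=
  (if i - 1 ∈ Icc 1 m then 1 else 0) + (if i + 1 ∈ Icc 1 m then 1 else 0)

lemma sum_pathDegree {m : ℕ} (hm : 1 ≤ m) :
    ∑ i ∈ Icc 1 m, pathDegree m i = 2 * ((m : ℝ) - 1) := by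
  have hleft : (Icc 1 m).filter (fun i => i - 1 ∈ Icc 1 m) = Icc 2 m := by
    ext i; simp only [mem_filter, mem_Icc]; omega
  have hright : (Icc 1 m).filter (fun i => i + 1 ∈ Icc 1 m) = Icc 1 (m - 1) := by
    ext i; simp only [mem_filter, mem_Icc]; omega
  simp only [pathDegree, sum_add_distrib, sum_boole, hleft, hright, Nat.card_Icc]
  rw [show m + 1 - 2 = m - 1 by omega, show m - 1 + 1 - 1 = m - 1 by omega, Nat.cast_sub hm]
  push_cast; ring

section Lattice

variable {Ω : Type*} [MeasurableSpace Ω] {μ : Measure Ω} {m : ℕ} {p : ℝ}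
  {Z : ℕ → ℕ → Ω → ℝ} {i j : ℕ}

lemma perimeterTerm_ae_eq (h : ∀ᵐ ω ∂μ, Z i j ω = 0 ∨ Z i j ω = 1) :
    (fun ω => if Z i j ω = 1 then
        4 - (Z (i - 1) j ω + Z (i + 1) j ω + Z i (j - 1) ω + Z i (j + 1) ω) else 0) =ᵐ[μ]
      fun ω => 4 * Z i j ω - (Z i j ω * Z (i - 1) j ω + Z i j ω * Z (i + 1) j ω +
        Z i j ω * Z i (j - 1) ω + Z i j ω * Z i (j + 1) ω) := by
  filter_upwards [h] with ω hω
  rw [ite_eq_one_eq_mul hω]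
  ring

lemma integral_mul_of_ne [IsProbabilityMeasure μ] {k l : ℕ}
    (hmeas : ∀ i j, Measurable (Z i j))
    (hzero : ∀ i j, (i = 0 ∨ i = m + 1 ∨ j = 0 ∨ j = m + 1) → ∀ ω, Z i j ω = 0)
    (hmean : ∀ i ∈ Icc 1 m, ∀ j ∈ Icc 1 m, ∫ ω, Z i j ω ∂μ = p)
    (hind : iIndepFun
      (fun q : (Icc 1 m ×ˢ Icc 1 m : Finset (ℕ × ℕ)) => Z q.1.1 q.1.2) μ)
    (hi : i ∈ Icc 1 m) (hj : j ∈ Icc 1 m) (hk : k ≤ m + 1) (hl : l ≤ m + 1)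
    (hne : (k, l) ≠ (i, j)) :
    ∫ ω, Z i j ω * Z k l ω ∂μ =
      p ^ 2 * (if k ∈ Icc 1 m then 1 else 0) * (if l ∈ Icc 1 m then 1 else 0) := by
  by_cases hkl : k ∈ Icc 1 m ∧ l ∈ Icc 1 m
  · have hindep : IndepFun (Z i j) (Z k l) μ :=
      hind.indepFun (i := ⟨(i, j), mem_product.mpr ⟨hi, hj⟩⟩)
        (j := ⟨(k, l), mem_product.mpr hkl⟩) (by simpa using hne.symm)
    rw [hindep.integral_fun_mul_eq_mul_integral (hmeas i j).aestronglyMeasurable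
      (hmeas k l).aestronglyMeasurable, hmean i hi j hj, hmean k hkl.1 l hkl.2]
    simp only [hkl, if_true]
    ring
  · have hframe : k = 0 ∨ k = m + 1 ∨ l = 0 ∨ l = m + 1 := by
      simp only [mem_Icc] at hkl; omega
    rcases not_and_or.mp hkl with h | h <;> simp [hzero k l hframe, h]

lemma integral_perimeterTerm [IsProbabilityMeasure μ] (hi : i ∈ Icc 1 m) (hj : j ∈ Icc 1 m)
    (hmeas : ∀ k l, Measurable (Z k l))
    (h01 : ∀ k l, k ≤ m + 1 → l ≤ m + 1 → ∀ᵐ ω ∂μ, Z k l ω = 0 ∨ Z k l ω = 1)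
    (hmean : ∫ ω, Z i j ω ∂μ = p)
    (hpair : ∀ k l, k ≤ m + 1 → l ≤ m + 1 → (k, l) ≠ (i, j) → ∫ ω, Z i j ω * Z k l ω ∂μ =
      p ^ 2 * (if k ∈ Icc 1 m then 1 else 0) * (if l ∈ Icc 1 m then 1 else 0)) :
    Integrable (fun ω => if Z i j ω = 1 then
        4 - (Z (i - 1) j ω + Z (i + 1) j ω + Z i (j - 1) ω + Z i (j + 1) ω) else 0) μ ∧
      ∫ ω, (if Z i j ω = 1 then
        4 - (Z (i - 1) j ω + Z (i + 1) j ω + Z i (j - 1) ω + Z i (j + 1) ω) else 0) ∂μ =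
      4 * p - p ^ 2 * (pathDegree m i + pathDegree m j) := by
  simp only [mem_Icc] at hi hj
  have hZ : Integrable (Z i j) μ :=
    integrable_of_ae_eq_zero_or_one (hmeas i j) (h01 i j (by omega) (by omega))
  have hprod : ∀ k l, k ≤ m + 1 → l ≤ m + 1 → Integrable (fun ω => Z i j ω * Z k l ω) μ :=
    fun k l hk hl => integrable_of_ae_eq_zero_or_one ((hmeas i j).mul (hmeas k l))
      (ae_mul_eq_zero_or_one (h01 i j (by omega) (by omega)) (h01 k l hk hl))
  have hW := hprod (i - 1) j (by omega) (by omega)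
  have hE := hprod (i + 1) j (by omega) (by omega)
  have hS := hprod i (j - 1) (by omega) (by omega)
  have hN := hprod i (j + 1) (by omega) (by omega)
  have hae := perimeterTerm_ae_eq (μ := μ) (h01 i j (by omega) (by omega))
  have hWE : Integrable (fun ω => Z i j ω * Z (i - 1) j ω + Z i j ω * Z (i + 1) j ω) μ :=
    hW.add hE
  have hWES : Integrable (fun ω => Z i j ω * Z (i - 1) j ω + Z i j ω * Z (i + 1) j ω +
      Z i j ω * Z i (j - 1) ω) μ := hWE.add hS
  have hWESN : Integrable (fun ω => Z i j ω * Z (i - 1) j ω + Z i j ω * Z (i + 1) j ω +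
      Z i j ω * Z i (j - 1) ω + Z i j ω * Z i (j + 1) ω) μ := hWES.add hN
  refine ⟨((hZ.const_mul 4).sub hWESN).congr hae.symm, ?_⟩
  rw [integral_congr_ae hae, integral_sub (hZ.const_mul 4) hWESN, integral_add hWES hN,
    integral_add hWE hS, integral_add hW hE, integral_const_mul, hmean,
    hpair (i - 1) j (by omega) (by omega) (by simp only [ne_eq, Prod.mk.injEq]; omega),
    hpair (i + 1) j (by omega) (by omega) (by simp),
    hpair i (j - 1) (by omega) (by omega) (by simp only [ne_eq, Prod.mk.injEq]; omega),
    hpair i (j + 1) (by omega) (by omega) (by simp)]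
  simp only [pathDegree, mem_Icc, hi, hj, and_self, if_true]
  ring

end Lattice

/-- Under CSR (independent Bernoulli(p) binary image with white border), the expected value of
the scaled perimeter is `E[P_m] = 4p(m - (m-1)p)`. -/
theorem expectation_perimeter
    {Ω : Type*} [MeasureSpace Ω] [IsProbabilityMeasure (ℙ : Measure Ω)]
    (m : ℕ) (hm : 3 ≤ m) (p : ℝ) (hp0 : 0 ≤ p) (hp1 : p ≤ 1)
    (Z : ℕ → ℕ → Ω → ℝ)
    (hmeas : ∀ i j, Measurable (Z i j))
    (hzero : ∀ i j, (i = 0 ∨ i = m + 1 ∨ j = 0 ∨ j = m + 1) → ∀ ω, Z i j ω = 0)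
    (hone : ∀ i ∈ Finset.Icc 1 m, ∀ j ∈ Finset.Icc 1 m,
      ℙ {ω | Z i j ω = 1} = ENNReal.ofReal p)
    (hzeroP : ∀ i ∈ Finset.Icc 1 m, ∀ j ∈ Finset.Icc 1 m,
      ℙ {ω | Z i j ω = 0} = ENNReal.ofReal (1 - p))
    (hind : iIndepFun
      (fun q : (Finset.Icc 1 m ×ˢ Finset.Icc 1 m : Finset (ℕ × ℕ)) => Z q.1.1 q.1.2) ℙ) :
    ∫ ω, perimSum m (fun i j => Z i j ω) ∂ℙ =
      4 * p * ((m : ℝ) - ((m : ℝ) - 1) * p) := by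
  have h01 : ∀ k l, k ≤ m + 1 → l ≤ m + 1 → ∀ᵐ ω ∂ℙ, Z k l ω = 0 ∨ Z k l ω = 1 := by
    intro k l hk hl
    by_cases hkl : k ∈ Icc 1 m ∧ l ∈ Icc 1 m
    · refine ae_eq_zero_or_one_of_measure_add_eq_one (hmeas k l) ?_
      rw [hzeroP k hkl.1 l hkl.2, hone k hkl.1 l hkl.2, ← ENNReal.ofReal_add (by linarith) hp0]
      simp
    · have hframe : k = 0 ∨ k = m + 1 ∨ l = 0 ∨ l = m + 1 := by
        simp only [mem_Icc] at hkl; omega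
      exact ae_of_all _ fun ω => Or.inl (hzero k l hframe ω)
  have hmean : ∀ i ∈ Icc 1 m, ∀ j ∈ Icc 1 m, ∫ ω, Z i j ω = p := by
    intro i hi j hj
    have h01' := h01 i j ((mem_Icc.mp hi).2.trans m.le_succ) ((mem_Icc.mp hj).2.trans m.le_succ)
    rw [integral_eq_measureReal_of_ae_eq_zero_or_one (hmeas i j) h01', measureReal_def,
      hone i hi j hj, ENNReal.toReal_ofReal hp0]
  have hcell := fun i hi j hj => integral_perimeterTerm hi hj hmeas h01 (hmean i hi j hj)
    fun k l hk hl hne => integral_mul_of_ne hmeas hzero hmean hind hi hj hk hl hne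
  calc ∫ ω, perimSum m (fun i j => Z i j ω)
      = (1 / m) * ∑ i ∈ Icc 1 m, ∑ j ∈ Icc 1 m,
          (4 * p - p ^ 2 * (pathDegree m i + pathDegree m j)) := by
        simp only [perimSum]
        rw [integral_const_mul, integral_finsetSum _ fun i hi =>
          integrable_finsetSum _ fun j hj => (hcell i hi j hj).1]
        refine congrArg _ (sum_congr rfl fun i hi => ?_)
        rw [integral_finsetSum _ fun j hj => (hcell i hi j hj).1]
        exact sum_congr rfl fun j hj => (hcell i hi j hj).2
    _ = 4 * p * ((m : ℝ) - ((m : ℝ) - 1) * p) := by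
        have hm0 : (m : ℝ) ≠ 0 := by positivity
        simp only [sum_sub_distrib, mul_add, sum_add_distrib, ← mul_sum, sum_const,
          Nat.card_Icc, add_tsub_cancel_right, nsmul_eq_mul, sum_pathDegree (by omega : 1 ≤ m)]
        field_simp
        ring
end
end

section
/- The variance of the scaled perimeter satisfies Var(P_m) = (8/m²)·p(1−p)·( (7m² − 13m + 4)p² − 7m(m−1)p + 2m² ). -/
open MeasureTheory ProbabilityTheory Finset Filter

noncomputable section

/-!
On the almost sure event that every pixel is `0` or `1`, `m * P_m = ∑_c Z_c (4 - ∑_{d ∼ c} Z_d)`,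
where `d ∼ c` is adjacency in the square lattice `hasse ℕ □ hasse ℕ` restricted to the
`m × m` grid (pixels on the frame vanish). Writing `Z_c = p + ξ_c` with independent centred `ξ_c`
of variance `v = p (1 - p)`, this is a constant plus `∑_c (4 - 2 p deg c) ξ_c - ∑_{c ∼ d} ξ_c ξ_d`.
Distinct monomials in independent centred variables are orthogonal, so
`Var (m P_m) = v ∑_c (4 - 2 p deg c)^2 + 2 v^2 #{(c, d) | c ∼ d}`, and the grid has `4` corners of
degree `2`, `4 (m - 2)` edge pixels of degree `3` and `(m - 2)^2` inner pixels of degree `4`.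
-/

open SimpleGraph
open scoped ENNReal

section IndependentProducts

variable {Ω ι : Type*} [MeasurableSpace Ω] {μ : Measure Ω} [Fintype ι] [DecidableEq ι]
  {ξ : ι → Ω → ℝ} {v : ℝ}

theorem integral_prod_mul_prod_of_iIndepFun (hind : iIndepFun ξ μ)
    (hξ : ∀ i, AEMeasurable (ξ i) μ) (h0 : ∀ i, ∫ ω, ξ i ω ∂μ = 0)
    (hv : ∀ i, ∫ ω, ξ i ω ^ 2 ∂μ = v) (s t : Finset ι) :
    ∫ ω, (∏ i ∈ s, ξ i ω) * ∏ i ∈ t, ξ i ω ∂μ = if s = t then v ^ #s else 0 := by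
  have := hind.isProbabilityMeasure
  -- `k i ∈ {0, 1, 2}` is the multiplicity of `ξ i`; if `s ≠ t`, some factor `ξ i` appears
  -- exactly once and its mean `0` kills the product.
  set k : ι → ℕ := fun i => (if i ∈ s then 1 else 0) + (if i ∈ t then 1 else 0)
  have hk : ∀ ω, (∏ i ∈ s, ξ i ω) * ∏ i ∈ t, ξ i ω = ∏ i, ξ i ω ^ k i := fun ω => by
    simp only [k, pow_add, prod_mul_distrib, pow_ite, pow_one, pow_zero, Fintype.prod_ite_mem]
  simp_rw [hk]
  rw [hind.integral_fun_prod_comp hξ fun i => (continuous_pow (k i)).aestronglyMeasurable]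
  split_ifs with hst
  · subst hst
    have hmom : ∀ i, ∫ ω, ξ i ω ^ k i ∂μ = if i ∈ s then v else 1 := fun i => by
      by_cases hi : i ∈ s <;> simp [k, hi, hv]
    simp only [hmom, Fintype.prod_ite_mem, prod_const]
  · obtain ⟨i, hi⟩ : ∃ i, k i = 1 := by
      by_contra! h
      refine hst (Finset.ext fun i => ?_)
      have := h i
      by_cases hs : i ∈ s <;> by_cases ht : i ∈ t <;> simp_all [k]
    exact prod_eq_zero (mem_univ i) (by simp only [hi, pow_one, h0])

variable [IsProbabilityMeasure μ]

theorem variance_sum_mul_prod_of_iIndepFun {κ : Type*} (hind : iIndepFun ξ μ)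
    (hξ : ∀ i, MemLp (ξ i) ∞ μ) (h0 : ∀ i, ∫ ω, ξ i ω ∂μ = 0)
    (hv : ∀ i, ∫ ω, ξ i ω ^ 2 ∂μ = v) (T : Finset κ) (S : κ → Finset ι)
    (hS : ∀ a ∈ T, S a ≠ ∅) (c : κ → ℝ) :
    variance (fun ω => ∑ a ∈ T, c a * ∏ i ∈ S a, ξ i ω) μ =
      ∑ a ∈ T, ∑ b ∈ T, if S a = S b then c a * c b * v ^ #(S a) else 0 := by
  have hprod : ∀ s, MemLp (fun ω => ∏ i ∈ s, ξ i ω) ∞ μ := fun s => by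
    simpa using MemLp.prod' (s := s) (p := fun _ => ∞) fun i _ => hξ i
  have hint : ∀ s t, Integrable (fun ω => (∏ i ∈ s, ξ i ω) * ∏ i ∈ t, ξ i ω) μ :=
    fun s t => ((hprod t).mul' (hprod s)).integrable le_top
  have hmoment := integral_prod_mul_prod_of_iIndepFun hind
    (fun i => (hξ i).aestronglyMeasurable.aemeasurable) h0 hv
  have hmean : ∫ ω, ∑ a ∈ T, c a * ∏ i ∈ S a, ξ i ω ∂μ = 0 := by
    rw [integral_finsetSum _ fun a _ => ((hprod (S a)).integrable le_top).const_mul (c a)]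
    refine sum_eq_zero fun a ha => ?_
    have h := hmoment (S a) ∅
    simp only [prod_empty, mul_one, hS a ha, if_false] at h
    rw [integral_const_mul, h, mul_zero]
  rw [variance_of_integral_eq_zero (Finset.aemeasurable_fun_sum _ fun a _ =>
    (hprod (S a)).aestronglyMeasurable.aemeasurable.const_mul (c a)) hmean]
  have hterm : ∀ a b, (fun ω => (c a * ∏ i ∈ S a, ξ i ω) * (c b * ∏ i ∈ S b, ξ i ω)) =
      fun ω => c a * c b * ((∏ i ∈ S a, ξ i ω) * ∏ i ∈ S b, ξ i ω) := fun a b => by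
    ext; ring
  simp_rw [sq, sum_mul_sum]
  rw [integral_finsetSum _ fun a _ => integrable_finsetSum _ fun b _ => by
    rw [hterm]; exact (hint _ _).const_mul _]
  refine sum_congr rfl fun a _ => ?_
  rw [integral_finsetSum _ fun b _ => by rw [hterm]; exact (hint _ _).const_mul _]
  refine sum_congr rfl fun b _ => ?_
  rw [hterm, integral_const_mul, hmoment, mul_ite, mul_zero]

theorem filter_pair_eq_pair (i j : ι) :
    ({b : ι × ι | ({i, j} : Finset ι) = {b.1, b.2}} : Finset (ι × ι)) = {(i, j), (j, i)} := by
  ext ⟨k, l⟩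
  simp only [mem_filter, mem_univ, true_and, mem_insert, mem_singleton, Prod.mk.injEq,
    ← coe_inj, coe_pair, Set.pair_eq_pair_iff]
  tauto

theorem variance_linear_add_quadratic_of_iIndepFun (hind : iIndepFun ξ μ)
    (hξ : ∀ i, MemLp (ξ i) ∞ μ) (h0 : ∀ i, ∫ ω, ξ i ω ∂μ = 0)
    (hv : ∀ i, ∫ ω, ξ i ω ^ 2 ∂μ = v) (α : ι → ℝ) (β : ι → ι → ℝ) (hβ : ∀ i, β i i = 0) :
    variance (fun ω => ∑ i, α i * ξ i ω + ∑ i, ∑ j, β i j * (ξ i ω * ξ j ω)) μ =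
      v * ∑ i, α i ^ 2 + v ^ 2 * ∑ i, ∑ j, β i j * (β i j + β j i) := by
  -- The pair `(i, j)` indexes the monomial `∏ k ∈ {i, j}, ξ k`, which is `ξ i` on the diagonal
  -- (carrying `α i`) and `ξ i * ξ j` off it (carrying `β i j`).
  set c : ι × ι → ℝ := fun a => if a.1 = a.2 then α a.1 else β a.1 a.2
  have hterm : ∀ i j ω, c (i, j) * ∏ k ∈ {i, j}, ξ k ω =
      (if i = j then α i * ξ i ω else 0) + β i j * (ξ i ω * ξ j ω) := fun i j ω => by
    by_cases h : i = j
    · subst h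
      simp [c, hβ]
    · simp [c, h, prod_pair h]
  have hrepr : (fun ω => ∑ i, α i * ξ i ω + ∑ i, ∑ j, β i j * (ξ i ω * ξ j ω)) =
      fun ω => ∑ a, c a * ∏ k ∈ {a.1, a.2}, ξ k ω := by
    ext ω
    simp only [Fintype.sum_prod_type, hterm, sum_add_distrib, sum_ite_eq, mem_univ, if_true]
  have hpair : ∀ a : ι × ι, (∑ b, if ({a.1, a.2} : Finset ι) = {b.1, b.2} then
      c a * c b * v ^ #{a.1, a.2} else 0) =
      (if a.1 = a.2 then v * α a.1 ^ 2 else 0) + v ^ 2 * (β a.1 a.2 * (β a.1 a.2 + β a.2 a.1)) := by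
    rintro ⟨i, j⟩
    rw [← sum_filter, filter_pair_eq_pair]
    by_cases h : i = j
    · subst h
      simp [c, hβ, sq, mul_comm]
    · rw [sum_pair (by simp [h]), card_pair h]
      simp only [c, h, Ne.symm h, if_false, zero_add]
      ring
  rw [hrepr, variance_sum_mul_prod_of_iIndepFun hind hξ h0 hv univ _
    (fun a _ => insert_ne_empty _ _) c]
  simp only [hpair, sum_add_distrib, Fintype.sum_prod_type, sum_ite_eq, mem_univ, if_true,
    mul_sum]

end IndependentProducts

section Bernoulli

variable {Ω : Type*} [MeasurableSpace Ω] {μ : Measure Ω} {X : Ω → ℝ} {p : ℝ}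

theorem ae_eq_zero_or_eq_one [IsProbabilityMeasure μ] (hX : Measurable X) (hp0 : 0 ≤ p)
    (hp1 : p ≤ 1) (h0 : μ {ω | X ω = 0} = ENNReal.ofReal (1 - p))
    (h1 : μ {ω | X ω = 1} = ENNReal.ofReal p) :
    ∀ᵐ ω ∂μ, X ω = 0 ∨ X ω = 1 := by
  have hm : ∀ x, MeasurableSet {ω | X ω = x} := fun x => hX (measurableSet_singleton x)
  refine (ae_iff_measure_eq (p := fun ω => X ω = 0 ∨ X ω = 1)
    ((hm 0).union (hm 1)).nullMeasurableSet).2 ?_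
  change μ ({ω | X ω = 0} ∪ {ω | X ω = 1}) = μ Set.univ
  rw [measure_union (Set.disjoint_left.2 fun ω h0 h1 => by simp_all) (hm 1), h0, h1,
    ← ENNReal.ofReal_add (by linarith) hp0, measure_univ]
  norm_num

theorem integrable_indicator_one_comp [IsFiniteMeasure μ] (hX : Measurable X) :
    Integrable (fun ω => ({1} : Set ℝ).indicator (1 : ℝ → ℝ) (X ω)) μ :=
  (integrable_const (1 : ℝ)).indicator (hX (measurableSet_singleton 1))

theorem integral_indicator_one_comp (hX : Measurable X) (hp0 : 0 ≤ p)
    (h1 : μ {ω | X ω = 1} = ENNReal.ofReal p) :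
    ∫ ω, ({1} : Set ℝ).indicator 1 (X ω) ∂μ = p := by
  change ∫ ω, (X ⁻¹' {1}).indicator 1 ω ∂μ = p
  rw [integral_indicator_one (hX (measurableSet_singleton 1)), measureReal_def,
    show X ⁻¹' {1} = {ω | X ω = 1} from rfl, h1, ENNReal.toReal_ofReal hp0]

def centredIndicator (p x : ℝ) : ℝ := ({1} : Set ℝ).indicator 1 x - p

theorem measurable_centredIndicator (p : ℝ) : Measurable (centredIndicator p) :=
  (measurable_one.indicator (measurableSet_singleton 1)).sub_const p

theorem eq_add_centredIndicator {x : ℝ} (hx : x = 0 ∨ x = 1) (p : ℝ) :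
    x = p + centredIndicator p x := by
  rcases hx with rfl | rfl <;> simp [centredIndicator]

theorem abs_centredIndicator_le (p x : ℝ) : |centredIndicator p x| ≤ 1 + |p| := by
  by_cases hx : x = 1 <;> simp only [centredIndicator, Set.indicator, Set.mem_singleton_iff, hx,
    if_true, if_false, Pi.one_apply, zero_sub, abs_neg]
  · exact (abs_sub _ _).trans (by rw [abs_one])
  · linarith

theorem centredIndicator_sq (p x : ℝ) :
    centredIndicator p x ^ 2 = (1 - 2 * p) * ({1} : Set ℝ).indicator 1 x + p ^ 2 := by
  by_cases hx : x = 1 <;> simp only [centredIndicator, Set.indicator, Set.mem_singleton_iff, hx,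
    if_true, if_false, Pi.one_apply] <;> ring

variable [IsProbabilityMeasure μ]

theorem integral_centredIndicator (hX : Measurable X) (hp0 : 0 ≤ p)
    (h1 : μ {ω | X ω = 1} = ENNReal.ofReal p) :
    ∫ ω, centredIndicator p (X ω) ∂μ = 0 := by
  unfold centredIndicator
  rw [integral_sub (integrable_indicator_one_comp hX) (integrable_const p),
    integral_indicator_one_comp hX hp0 h1, integral_const, probReal_univ, one_smul, sub_self]

theorem integral_centredIndicator_sq (hX : Measurable X) (hp0 : 0 ≤ p)
    (h1 : μ {ω | X ω = 1} = ENNReal.ofReal p) :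
    ∫ ω, centredIndicator p (X ω) ^ 2 ∂μ = p * (1 - p) := by
  simp_rw [centredIndicator_sq]
  rw [integral_add ((integrable_indicator_one_comp hX).const_mul _) (integrable_const _),
    integral_const_mul, integral_indicator_one_comp hX hp0 h1, integral_const, probReal_univ,
    one_smul]
  ring

theorem variance_linear_add_quadratic_of_bernoulli {ι : Type*} [Fintype ι] [DecidableEq ι]
    {X : ι → Ω → ℝ} (hX : ∀ i, Measurable (X i)) (hind : iIndepFun X μ) (hp0 : 0 ≤ p)
    (h1 : ∀ i, μ {ω | X i ω = 1} = ENNReal.ofReal p) (α : ι → ℝ) (β : ι → ι → ℝ)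
    (hβ : ∀ i, β i i = 0) :
    variance (fun ω => ∑ i, α i * centredIndicator p (X i ω) +
        ∑ i, ∑ j, β i j * (centredIndicator p (X i ω) * centredIndicator p (X j ω))) μ =
      p * (1 - p) * ∑ i, α i ^ 2 + (p * (1 - p)) ^ 2 * ∑ i, ∑ j, β i j * (β i j + β j i) :=
  variance_linear_add_quadratic_of_iIndepFun (ξ := fun i ω => centredIndicator p (X i ω))
    (hind.comp _ fun _ => measurable_centredIndicator p)
    (fun i => memLp_top_of_bound ((measurable_centredIndicator p).comp (hX i)).aestronglyMeasurable
      _ (ae_of_all _ fun _ => abs_centredIndicator_le p _))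
    (fun i => integral_centredIndicator (hX i) hp0 (h1 i))
    (fun i => integral_centredIndicator_sq (hX i) hp0 (h1 i)) α β hβ

end Bernoulli

theorem sum_add_mul_sub_sum_mul_add {ι : Type*} [Fintype ι] (κ p : ℝ) (A : ι → ι → ℝ)
    (hA : ∀ i j, A i j = A j i) (x : ι → ℝ) :
    ∑ i, (p + x i) * (κ - ∑ j, A i j * (p + x j)) =
      ∑ i, p * (κ - p * ∑ j, A i j) +
        (∑ i, (κ - 2 * p * ∑ j, A i j) * x i + ∑ i, ∑ j, -A i j * (x i * x j)) := by
  have hswap : ∑ i, ∑ j, A i j * x j = ∑ i, (∑ j, A i j) * x i := by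
    rw [sum_comm]
    simp_rw [sum_mul, hA]
  have hterm : ∀ i, (p + x i) * (κ - ∑ j, A i j * (p + x j)) =
      p * (κ - p * ∑ j, A i j) + (κ - 2 * p * ∑ j, A i j) * x i + p * ((∑ j, A i j) * x i)
        - p * ∑ j, A i j * x j + ∑ j, -A i j * (x i * x j) := fun i => by
    simp only [mul_add, sum_add_distrib, ← sum_mul, neg_mul, sum_neg_distrib]
    simp only [mul_left_comm (A i _) (x i), ← mul_sum]
    ring
  simp only [hterm, sum_add_distrib, sum_sub_distrib, ← mul_sum, hswap]
  ring

section SquareLattice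

open scoped Classical

abbrev grid (m : ℕ) : Finset (ℕ × ℕ) := Icc 1 m ×ˢ Icc 1 m

def gridDegree (m : ℕ) (c : ℕ × ℕ) : ℝ :=
  ∑ d ∈ grid m, (hasse ℕ □ hasse ℕ).adjMatrix ℝ c d

theorem sum_coe_grid_adjMatrix (m : ℕ) (c : ℕ × ℕ) :
    ∑ r : grid m, (hasse ℕ □ hasse ℕ).adjMatrix ℝ c r = gridDegree m c :=
  sum_coe_sort _ _

theorem neg_adjMatrix_mul_add {V : Type*} (G : SimpleGraph V) (v w : V) :
    -G.adjMatrix ℝ v w * (-G.adjMatrix ℝ v w + -G.adjMatrix ℝ w v) = 2 * G.adjMatrix ℝ v w := by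
  rw [← (isSymm_adjMatrix G).apply v w, adjMatrix_apply]
  split_ifs <;> norm_num

theorem adjMatrix_hasse_nat_apply (a b : ℕ) :
    (hasse ℕ).adjMatrix ℝ a b = (if a + 1 = b then 1 else 0) + (if b + 1 = a then 1 else 0) := by
  rw [adjMatrix_apply, hasse_adj, Nat.covBy_iff_add_one_eq, Nat.covBy_iff_add_one_eq]
  split_ifs <;> norm_num <;> omega

theorem sum_Icc_adjMatrix_hasse_nat_mul {m i : ℕ} (hi : i ∈ Icc 1 m) (f : ℕ → ℝ) :
    ∑ b ∈ Icc 1 m, (hasse ℕ).adjMatrix ℝ i b * f b =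
      (if i < m then f (i + 1) else 0) + (if 1 < i then f (i - 1) else 0) := by
  rw [mem_Icc] at hi
  have hpred : ∀ b, (b + 1 = i) = (i - 1 = b) := fun b => propext (by omega)
  simp only [adjMatrix_hasse_nat_apply, add_mul, ite_mul, one_mul, zero_mul, sum_add_distrib,
    hpred, sum_ite_eq, mem_Icc]
  congr 1 <;> congr 1 <;> simp only [eq_iff_iff] <;> omega

theorem sum_product_boxProd_adjMatrix_mul {α β R : Type*} [Semiring R] (G : SimpleGraph α)
    (H : SimpleGraph β) {s : Finset α} {t : Finset β} {x : α × β} (hx₁ : x.1 ∈ s)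
    (hx₂ : x.2 ∈ t) (f : α × β → R) :
    ∑ y ∈ s ×ˢ t, (G □ H).adjMatrix R x y * f y =
      ∑ a ∈ s, G.adjMatrix R x.1 a * f (a, x.2) + ∑ b ∈ t, H.adjMatrix R x.2 b * f (x.1, b) := by
  have hsplit : ∀ y : α × β, (G □ H).adjMatrix R x y =
      (if G.Adj x.1 y.1 ∧ x.2 = y.2 then 1 else 0) +
        (if H.Adj x.2 y.2 ∧ x.1 = y.1 then 1 else 0) := fun y => by
    rw [adjMatrix_apply, boxProd_adj]
    by_cases h₂ : x.2 = y.2 <;> by_cases h₁ : x.1 = y.1 <;> simp [h₁, h₂]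
  simp only [hsplit, add_mul, ite_mul, one_mul, zero_mul, sum_add_distrib, sum_product, ite_and,
    adjMatrix_apply]
  congr 1
  · exact sum_congr rfl fun a _ => by split_ifs <;> simp [hx₂]
  · rw [sum_comm]
    exact sum_congr rfl fun b _ => by split_ifs <;> simp [hx₁]

theorem sum_grid_adjMatrix_mul {m : ℕ} {c : ℕ × ℕ} (hc : c ∈ grid m) (f : ℕ × ℕ → ℝ) :
    ∑ d ∈ grid m, (hasse ℕ □ hasse ℕ).adjMatrix ℝ c d * f d =
      (if c.1 < m then f (c.1 + 1, c.2) else 0) + (if 1 < c.1 then f (c.1 - 1, c.2) else 0) +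
        ((if c.2 < m then f (c.1, c.2 + 1) else 0) +
          (if 1 < c.2 then f (c.1, c.2 - 1) else 0)) := by
  obtain ⟨hc₁, hc₂⟩ := mem_product.1 hc
  rw [sum_product_boxProd_adjMatrix_mul _ _ hc₁ hc₂, sum_Icc_adjMatrix_hasse_nat_mul hc₁,
    sum_Icc_adjMatrix_hasse_nat_mul hc₂]

theorem sum_Icc_comp_ite_add_ite {m : ℕ} (hm : 2 ≤ m) (g : ℝ → ℝ) :
    ∑ i ∈ Icc 1 m, g ((if i < m then 1 else 0) + (if 1 < i then 1 else 0)) =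
      2 * g 1 + (m - 2) * g 2 := by
  obtain ⟨n, rfl⟩ : ∃ n, m = n + 2 := ⟨m - 2, by omega⟩
  have hIcc : Icc 1 (n + 2) = insert 1 (insert (n + 2) (Icc 2 (n + 1))) := by
    ext; simp only [mem_insert, mem_Icc]; omega
  have hmid : ∀ i ∈ Icc 2 (n + 1),
      g ((if i < n + 2 then 1 else 0) + (if 1 < i then 1 else 0)) = g 2 := fun i hi => by
    rw [mem_Icc] at hi
    rw [if_pos (by omega), if_pos (by omega), one_add_one_eq_two]
  rw [hIcc, sum_insert (by simp), sum_insert (by simp), sum_congr rfl hmid, sum_const,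
    Nat.card_Icc]
  simp only [lt_add_iff_pos_left, if_true, lt_self_iff_false, if_false, add_pos_iff,
    zero_lt_one, or_true]
  push_cast
  ring_nf

theorem sum_grid_comp_gridDegree {m : ℕ} (hm : 2 ≤ m) (F : ℝ → ℝ) :
    ∑ c ∈ grid m, F (gridDegree m c) = 4 * F 2 + 4 * (m - 2) * F 3 + (m - 2) ^ 2 * F 4 := by
  set e : ℕ → ℝ := fun i => (if i < m then 1 else 0) + (if 1 < i then 1 else 0)
  have hdeg : ∀ c ∈ grid m, gridDegree m c = e c.1 + e c.2 := fun c hc => by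
    have h := sum_grid_adjMatrix_mul hc fun _ => 1
    simp only [mul_one] at h
    rw [gridDegree, h]
  rw [sum_congr rfl fun c hc => congrArg F (hdeg c hc), sum_product]
  calc ∑ i ∈ Icc 1 m, ∑ j ∈ Icc 1 m, F (e i + e j)
      = ∑ i ∈ Icc 1 m, (2 * F (e i + 1) + (m - 2) * F (e i + 2)) :=
        sum_congr rfl fun i _ => sum_Icc_comp_ite_add_ite hm fun x => F (e i + x)
    _ = 4 * F 2 + 4 * (m - 2) * F 3 + (m - 2) ^ 2 * F 4 := by
        rw [sum_Icc_comp_ite_add_ite hm fun y => 2 * F (y + 1) + (m - 2) * F (y + 2)]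
        norm_num
        ring

theorem sum_grid_adjMatrix_mul_of_frame {m : ℕ} {z : ℕ → ℕ → ℝ}
    (hz : ∀ i j, (i = 0 ∨ i = m + 1 ∨ j = 0 ∨ j = m + 1) → z i j = 0) {i j : ℕ}
    (hi : i ∈ Icc 1 m) (hj : j ∈ Icc 1 m) :
    ∑ d ∈ grid m, (hasse ℕ □ hasse ℕ).adjMatrix ℝ (i, j) d * z d.1 d.2 =
      z (i - 1) j + z (i + 1) j + z i (j - 1) + z i (j + 1) := by
  rw [sum_grid_adjMatrix_mul (mem_product.2 ⟨hi, hj⟩)]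
  rw [mem_Icc] at hi hj
  have hframe : ∀ {P : Prop} [Decidable P] {a b : ℕ},
      (¬P → a = 0 ∨ a = m + 1 ∨ b = 0 ∨ b = m + 1) → (if P then z a b else 0) = z a b :=
    fun h => by
      split_ifs with hP
      · rfl
      · exact (hz _ _ (h hP)).symm
  rw [hframe (by omega), hframe (by omega), hframe (by omega), hframe (by omega)]
  ring

theorem perimSum_eq_sum_mul_sub_adjMatrix {m : ℕ} {z : ℕ → ℕ → ℝ}
    (hz : ∀ i j, (i = 0 ∨ i = m + 1 ∨ j = 0 ∨ j = m + 1) → z i j = 0)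
    (h01 : ∀ c ∈ grid m, z c.1 c.2 = 0 ∨ z c.1 c.2 = 1) :
    perimSum m z = (1 / m) * ∑ c ∈ grid m,
      z c.1 c.2 * (4 - ∑ d ∈ grid m, (hasse ℕ □ hasse ℕ).adjMatrix ℝ c d * z d.1 d.2) := by
  rw [perimSum, sum_product]
  congr 1
  refine sum_congr rfl fun i hi => sum_congr rfl fun j hj => ?_
  rw [sum_grid_adjMatrix_mul_of_frame hz hi hj]
  rcases h01 (i, j) (mem_product.2 ⟨hi, hj⟩) with h | h <;> simp only at h <;> simp [h]

theorem perimSum_eq_linear_add_quadratic {m : ℕ} {z : ℕ → ℕ → ℝ}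
    (hz : ∀ i j, (i = 0 ∨ i = m + 1 ∨ j = 0 ∨ j = m + 1) → z i j = 0)
    (h01 : ∀ c ∈ grid m, z c.1 c.2 = 0 ∨ z c.1 c.2 = 1) (p : ℝ) :
    perimSum m z = (1 / m) * (∑ c ∈ grid m, p * (4 - p * gridDegree m c) +
      (∑ q : grid m, (4 - 2 * p * gridDegree m q) * centredIndicator p (z q.1.1 q.1.2) +
        ∑ q : grid m, ∑ r : grid m, -(hasse ℕ □ hasse ℕ).adjMatrix ℝ q r *
          (centredIndicator p (z q.1.1 q.1.2) * centredIndicator p (z r.1.1 r.1.2)))) := by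
  set y : grid m → ℝ := fun q => centredIndicator p (z q.1.1 q.1.2)
  have hpix : ∀ q : grid m, z q.1.1 q.1.2 = p + y q := fun q =>
    eq_add_centredIndicator (h01 q.1 q.2) p
  rw [perimSum_eq_sum_mul_sub_adjMatrix hz h01, ← sum_coe_sort (grid m)]
  congr 1
  calc ∑ q : grid m, z q.1.1 q.1.2 *
        (4 - ∑ d ∈ grid m, (hasse ℕ □ hasse ℕ).adjMatrix ℝ q d * z d.1 d.2)
      = ∑ q : grid m, (p + y q) *
          (4 - ∑ r : grid m, (hasse ℕ □ hasse ℕ).adjMatrix ℝ q r * (p + y r)) := by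
        simp only [← hpix]
        exact sum_congr rfl fun q _ => by rw [← sum_coe_sort (grid m)]
    _ = _ := by
        rw [sum_add_mul_sub_sum_mul_add 4 p _ fun q r => (isSymm_adjMatrix _).apply r.1 q.1]
        simp only [sum_coe_grid_adjMatrix]
        rw [sum_coe_sort (grid m) fun c => p * (4 - p * gridDegree m c)]

end SquareLattice

/-- Under CSR, the variance of the scaled perimeter is
`Var(P_m) = (8/m²) p(1-p) ((7m² - 13m + 4)p² - 7m(m-1)p + 2m²)`. -/
theorem variance_perimeter
    {Ω : Type*} [MeasureSpace Ω] [IsProbabilityMeasure (ℙ : Measure Ω)]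
    (m : ℕ) (hm : 3 ≤ m) (p : ℝ) (hp0 : 0 ≤ p) (hp1 : p ≤ 1)
    (Z : ℕ → ℕ → Ω → ℝ)
    (hmeas : ∀ i j, Measurable (Z i j))
    (hzero : ∀ i j, (i = 0 ∨ i = m + 1 ∨ j = 0 ∨ j = m + 1) → ∀ ω, Z i j ω = 0)
    (hone : ∀ i ∈ Finset.Icc 1 m, ∀ j ∈ Finset.Icc 1 m,
      ℙ {ω | Z i j ω = 1} = ENNReal.ofReal p)
    (hzeroP : ∀ i ∈ Finset.Icc 1 m, ∀ j ∈ Finset.Icc 1 m,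
      ℙ {ω | Z i j ω = 0} = ENNReal.ofReal (1 - p))
    (hind : iIndepFun
      (fun q : (Finset.Icc 1 m ×ˢ Finset.Icc 1 m : Finset (ℕ × ℕ)) => Z q.1.1 q.1.2) ℙ) :
    variance (fun ω => perimSum m (fun i j => Z i j ω)) ℙ =
      (8 / (m : ℝ) ^ 2) * (p * (1 - p)) *
        ((7 * (m : ℝ) ^ 2 - 13 * (m : ℝ) + 4) * p ^ 2 -
          7 * (m : ℝ) * ((m : ℝ) - 1) * p + 2 * (m : ℝ) ^ 2) := by
  classical
  have h01 : ∀ᵐ ω, ∀ c ∈ grid m, Z c.1 c.2 ω = 0 ∨ Z c.1 c.2 ω = 1 :=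
    (eventually_all_finset _).2 fun c hc => ae_eq_zero_or_eq_one (hmeas _ _) hp0 hp1
      (hzeroP _ (mem_product.1 hc).1 _ (mem_product.1 hc).2)
      (hone _ (mem_product.1 hc).1 _ (mem_product.1 hc).2)
  have hae := h01.mono fun ω hω =>
    perimSum_eq_linear_add_quadratic (fun i j h => hzero i j h ω) hω p
  have hξ : ∀ q : grid m, Measurable fun ω => centredIndicator p (Z q.1.1 q.1.2 ω) :=
    fun q => (measurable_centredIndicator p).comp (hmeas _ _)
  rw [variance_congr hae, variance_const_mul, variance_const_add (by fun_prop),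
    variance_linear_add_quadratic_of_bernoulli (fun q => hmeas _ _) hind hp0
      (fun q => hone _ (mem_product.1 q.2).1 _ (mem_product.1 q.2).2) _ _ fun q => by simp]
  simp only [neg_adjMatrix_mul_add, ← mul_sum]
  have hsum : ∑ c ∈ grid m, gridDegree m c = 4 * 2 + 4 * (m - 2) * 3 + (m - 2) ^ 2 * 4 :=
    sum_grid_comp_gridDegree (by omega) fun x => x
  rw [sum_coe_sort (grid m) fun c => (4 - 2 * p * gridDegree m c) ^ 2,
    sum_grid_comp_gridDegree (by omega) fun x => (4 - 2 * p * x) ^ 2]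
  simp only [sum_coe_grid_adjMatrix]
  rw [sum_coe_sort (grid m) (gridDegree m), hsum]
  have hm0 : (m : ℝ) ≠ 0 := Nat.cast_ne_zero.2 (by omega)
  field_simp
  ring
end
end

section
/- For every p ∈ (0,1), the matrix Σ(p) is invertible (nonsingular). -/
/-- For every `p ∈ (0,1)`, the asymptotic covariance matrix `Σ(p)` of the three Minkowski
functionals (area, perimeter, Euler characteristic) is invertible (nonsingular). -/
theorem sigma_matrix_invertible (p : ℝ) (hp0 : 0 < p) (hp1 : p < 1) :
    IsUnit (Matrix.det (Matrix.of
      ![![p * (1 - p),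
          p * (1 - p) * (4 - 8 * p),
          p * (1 - p) * (1 - 4 * p + 12 * p ^ 2 - 4 * p ^ 3)],
        ![p * (1 - p) * (4 - 8 * p),
          p * (1 - p) * (16 - 56 * p + 56 * p ^ 2),
          p * (1 - p) * (4 - 36 * p + 92 * p ^ 2 - 88 * p ^ 3 + 24 * p ^ 4)],
        ![p * (1 - p) * (1 - 4 * p + 12 * p ^ 2 - 4 * p ^ 3),
          p * (1 - p) * (4 - 36 * p + 92 * p ^ 2 - 88 * p ^ 3 + 24 * p ^ 4),
          p * (1 - p) *
            (1 - 12 * p + 64 * p ^ 2 - 139 * p ^ 3 + 137 * p ^ 4 - 59 * p ^ 5 +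
              9 * p ^ 6)]])) := by
  rw [isUnit_iff_ne_zero]
  have key : Matrix.det (Matrix.of
      ![![p * (1 - p),
          p * (1 - p) * (4 - 8 * p),
          p * (1 - p) * (1 - 4 * p + 12 * p ^ 2 - 4 * p ^ 3)],
        ![p * (1 - p) * (4 - 8 * p),
          p * (1 - p) * (16 - 56 * p + 56 * p ^ 2),
          p * (1 - p) * (4 - 36 * p + 92 * p ^ 2 - 88 * p ^ 3 + 24 * p ^ 4)],
        ![p * (1 - p) * (1 - 4 * p + 12 * p ^ 2 - 4 * p ^ 3),
          p * (1 - p) * (4 - 36 * p + 92 * p ^ 2 - 88 * p ^ 3 + 24 * p ^ 4),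
          p * (1 - p) *
            (1 - 12 * p + 64 * p ^ 2 - 139 * p ^ 3 + 137 * p ^ 4 - 59 * p ^ 5 +
              9 * p ^ 6)]]) =
      -(p ^ 5 * (1 - p) ^ 3 *
        (176 - 512 * p + 40 * p ^ 2 + 800 * p ^ 3 - 224 * p ^ 4 - 32 * p ^ 5 + 8 * p ^ 6)) := by
    simp [Matrix.det_fin_three]
    ring
  rw [key]
  have h1 : 0 < 1 - p := by linarith
  have hh : 0 < 176 - 512 * p + 40 * p ^ 2 + 800 * p ^ 3 - 224 * p ^ 4 - 32 * p ^ 5 + 8 * p ^ 6 := by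
    nlinarith [sq_nonneg (p - 1/2), sq_nonneg (p^2 - p), sq_nonneg (p^3 - p), sq_nonneg p,
      sq_nonneg (p^2 - 1/2), mul_pos hp0 h1, sq_nonneg ((p - 1/2)*(1-p)), sq_nonneg (p*(1-p))]
  have : 0 < p ^ 5 * (1 - p) ^ 3 *
      (176 - 512 * p + 40 * p ^ 2 + 800 * p ^ 3 - 224 * p ^ 4 - 32 * p ^ 5 + 8 * p ^ 6) := by
    positivity
  linarith
end

section
/- Under the inhomogeneous Poisson alternative and the limiting regime, the normalized scaled perimeter converges almost surely: (1/m) P_m → 4·( ∫_{[0,1]²} q_{c,κ,f}(x) dx − ∫_{[0,1]²} q_{c,κ,f}(x)² dx ) as m → ∞, where q_{c,κ,f}(x) = Σ_{k=0}^{c−1} (κ^k / k!) f(x)^k e^{−κ f(x)}. -/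
open MeasureTheory ProbabilityTheory Finset Filter

noncomputable section

/-- The interval `[(i-1)/m, i/m)`, closed at the right end when `i = m`. -/
def cellIv (m i : ℕ) : Set ℝ :=
  if i = m then Set.Icc (((i : ℝ) - 1) / m) ((i : ℝ) / m)
  else Set.Ico (((i : ℝ) - 1) / m) ((i : ℝ) / m)

/-- The cell `C_{i,j}^{(m)}` of the partition of the unit square into `m²` bins. -/
def cellSet (m i j : ℕ) : Set (ℝ × ℝ) := cellIv m i ×ˢ cellIv m j

/-- The unit square `[0,1]²`. -/
def unitSq : Set (ℝ × ℝ) := Set.Icc (0 : ℝ) 1 ×ˢ Set.Icc (0 : ℝ) 1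

/-- `q_{c,κ,f}(x) = ∑_{k=0}^{c-1} (κ^k/k!) f(x)^k e^{-κ f(x)}`. -/
def qFun (c : ℕ) (κ : ℝ) (f : ℝ × ℝ → ℝ) (x : ℝ × ℝ) : ℝ :=
  ∑ k ∈ Finset.range c, κ ^ k / (Nat.factorial k : ℝ) * f x ^ k * Real.exp (-(κ * f x))

/-- The binary image obtained by thresholding the counts `Y` at level `c`, with a white
border: `Z_{i,j} = 1` iff `1 ≤ i,j ≤ m` and `Y_{i,j} ≥ c`. -/
def binZ (c m : ℕ) (Y : ℕ → ℕ → ℕ) (i j : ℕ) : ℝ :=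
  if 1 ≤ i ∧ i ≤ m ∧ 1 ≤ j ∧ j ≤ m ∧ c ≤ Y i j then 1 else 0


/-!
Write `(1/m) P_m = m⁻² ∑_p ψ(p)` over the cells `p` of the grid. Distinct cells are independent,
so `E ψ(p) = π_p (4 - ∑_q π_q)`, the sum running over the four neighbours `q` of `p`, where
`π_q = P(Z_q = 1) = 1 - P(Poisson(λ_m ∫_{C_q} f) < c)`. Hence `E[(1/m) P_m]` is the integral over
the unit square of a step function; by continuity of `f` and `λ_m / m² → κ` it converges at every
interior point `x` to `4 (q - q²)` with `q = q_{c,κ,f}(x)`, and dominated convergence gives the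
limit of the means.

Each `ψ(p)` is bounded by `4` and is a function of the counts in the `3 × 3` block around `p`, so
`ψ(p)` and `ψ(q)` are independent unless `p` and `q` are at sup-distance at most `2`. Therefore
`Var[(1/m) P_m] = O(m⁻²)`, which is summable, and Chebyshev's inequality with the Borel–Cantelli
lemma shows that `(1/m) P_m - E[(1/m) P_m] → 0` almost surely.
-/

open Topology

namespace PoissonPerimeter

/-! ### The grid of cells -/

def grid (m : ℕ) : Finset (ℕ × ℕ) := Icc 1 m ×ˢ Icc 1 m

lemma cellIv_subset_Icc (m i : ℕ) :
    cellIv m i ⊆ Set.Icc (((i : ℝ) - 1) / m) ((i : ℝ) / m) := by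
  unfold cellIv; split
  · exact subset_rfl
  · exact Set.Ico_subset_Icc_self

lemma Ico_subset_cellIv (m i : ℕ) :
    Set.Ico (((i : ℝ) - 1) / m) ((i : ℝ) / m) ⊆ cellIv m i := by
  unfold cellIv; split
  · exact Set.Ico_subset_Icc_self
  · exact subset_rfl

lemma measurableSet_cellSet (m i j : ℕ) : MeasurableSet (cellSet m i j) := by
  have hIv (k : ℕ) : MeasurableSet (cellIv m k) := by
    unfold cellIv; split
    · exact measurableSet_Icc
    · exact measurableSet_Ico
  exact (hIv i).prod (hIv j)

lemma volume_cellIv (m i : ℕ) :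
    volume (cellIv m i) = ENNReal.ofReal (1 / m) := by
  have hlen : (i : ℝ) / m - ((i : ℝ) - 1) / m = 1 / m := by ring
  unfold cellIv; split
  · rw [Real.volume_Icc, hlen]
  · rw [Real.volume_Ico, hlen]

lemma volume_cellSet_lt_top (m i j : ℕ) : volume (cellSet m i j) < ⊤ := by
  rw [cellSet, Measure.volume_eq_prod, Measure.prod_prod, volume_cellIv, volume_cellIv]
  exact ENNReal.mul_lt_top ENNReal.ofReal_lt_top ENNReal.ofReal_lt_top

lemma measureReal_cellSet (m i j : ℕ) :
    volume.real (cellSet m i j) = 1 / (m : ℝ) ^ 2 := by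
  rw [measureReal_def, cellSet, Measure.volume_eq_prod, Measure.prod_prod, volume_cellIv,
    volume_cellIv, ENNReal.toReal_mul, ENNReal.toReal_ofReal (by positivity)]
  ring

lemma cellSet_subset_unitSq {m : ℕ} {p : ℕ × ℕ} (hp : p ∈ grid m) :
    cellSet m p.1 p.2 ⊆ unitSq := by
  have hIv {i : ℕ} (hi : i ∈ Icc 1 m) : cellIv m i ⊆ Set.Icc 0 1 := by
    obtain ⟨hi1, him⟩ := Finset.mem_Icc.mp hi
    have hm : (0 : ℝ) < m := by norm_cast; omega
    refine (cellIv_subset_Icc m i).trans (Set.Icc_subset_Icc ?_ ?_)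
    · exact div_nonneg (by simpa using hi1) hm.le
    · exact (div_le_one hm).2 (by exact_mod_cast him)
  obtain ⟨h1, h2⟩ := Finset.mem_product.mp hp
  exact Set.prod_mono (hIv h1) (hIv h2)

/-- The index `i` of the cell `cellIv m i` containing `t ∈ [0, 1]`. -/
def cellIndex (m : ℕ) (t : ℝ) : ℕ := min m (⌊(m : ℝ) * t⌋₊ + 1)

lemma cellIndex_mem_Icc {m : ℕ} (hm : 0 < m) (t : ℝ) : cellIndex m t ∈ Icc 1 m :=
  Finset.mem_Icc.2 ⟨le_min hm (Nat.le_add_left 1 _), min_le_left _ _⟩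

lemma measurable_cellIndex (m : ℕ) : Measurable (cellIndex m) :=
  measurable_const.min ((Nat.measurable_floor.comp (measurable_const_mul _)).add_const 1)

lemma cellIndex_eq_of_mem {m i : ℕ} (hi : i ∈ Icc 1 m) {t : ℝ} (ht : t ∈ cellIv m i) :
    cellIndex m t = i := by
  obtain ⟨hi1, him⟩ := Finset.mem_Icc.mp hi
  have hm : (0 : ℝ) < m := by norm_cast; omega
  have hlo := (div_le_iff₀' hm).1 (cellIv_subset_Icc m i ht).1
  have hfloor : i - 1 ≤ ⌊(m : ℝ) * t⌋₊ := Nat.le_floor (by push_cast [hi1]; linarith)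
  unfold cellIndex
  rcases eq_or_ne i m with rfl | hne
  · omega
  · have hhi : (m : ℝ) * t < i := by
      rw [cellIv, if_neg hne] at ht
      exact (lt_div_iff₀' hm).1 ht.2
    have : ⌊(m : ℝ) * t⌋₊ < i := (Nat.floor_lt' (by omega)).2 hhi
    omega

lemma mem_cellIv_cellIndex {m : ℕ} (hm : 0 < m) {t : ℝ} (ht : t ∈ Set.Icc (0 : ℝ) 1) :
    t ∈ cellIv m (cellIndex m t) := by
  have hm' : (0 : ℝ) < m := by exact_mod_cast hm
  have hfl := Nat.floor_le (mul_nonneg hm'.le ht.1)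
  have hlt := Nat.lt_floor_add_one ((m : ℝ) * t)
  rcases le_or_gt m ⌊(m : ℝ) * t⌋₊ with hkm | hkm
  · have ht1 : t = 1 := by
      have : (m : ℝ) ≤ m * t := le_trans (by exact_mod_cast hkm) hfl
      nlinarith [ht.2]
    have : cellIndex m t = m := min_eq_left (by omega)
    rw [this, ht1, cellIv, if_pos rfl]
    constructor
    · rw [div_le_one hm']; linarith
    · rw [div_self hm'.ne']
  · have : cellIndex m t = ⌊(m : ℝ) * t⌋₊ + 1 := min_eq_right (by omega)
    rw [this]
    apply Ico_subset_cellIv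
    push_cast
    constructor
    · rw [add_sub_cancel_right, div_le_iff₀' hm']; exact hfl
    · rw [lt_div_iff₀' hm']; exact hlt

lemma unitSq_eq_biUnion {m : ℕ} (hm : 0 < m) :
    unitSq = ⋃ p ∈ grid m, cellSet m p.1 p.2 := by
  refine Set.Subset.antisymm (fun x hx => ?_)
    (Set.iUnion₂_subset fun p hp => cellSet_subset_unitSq hp)
  refine Set.mem_iUnion₂.2 ⟨(cellIndex m x.1, cellIndex m x.2), ?_, ?_⟩
  · exact Finset.mem_product.2 ⟨cellIndex_mem_Icc hm _, cellIndex_mem_Icc hm _⟩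
  · exact ⟨mem_cellIv_cellIndex hm hx.1, mem_cellIv_cellIndex hm hx.2⟩

lemma pairwiseDisjoint_cellSet (m : ℕ) :
    (grid m : Set (ℕ × ℕ)).PairwiseDisjoint fun p => cellSet m p.1 p.2 := by
  intro p hp q hq hpq
  refine Set.disjoint_left.2 fun x hxp hxq => hpq ?_
  obtain ⟨hp1, hp2⟩ := Finset.mem_product.1 hp
  obtain ⟨hq1, hq2⟩ := Finset.mem_product.1 hq
  exact Prod.ext ((cellIndex_eq_of_mem hp1 hxp.1).symm.trans (cellIndex_eq_of_mem hq1 hxq.1))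
    ((cellIndex_eq_of_mem hp2 hxp.2).symm.trans (cellIndex_eq_of_mem hq2 hxq.2))

lemma integral_unitSq_comp_cellIndex {m : ℕ} (hm : 0 < m) (g : ℕ → ℕ → ℝ) :
    ∫ x in unitSq, g (cellIndex m x.1) (cellIndex m x.2) =
      1 / (m : ℝ) ^ 2 * ∑ p ∈ grid m, g p.1 p.2 := by
  have hconst {p : ℕ × ℕ} (hp : p ∈ grid m) : Set.EqOn
      (fun x : ℝ × ℝ => g (cellIndex m x.1) (cellIndex m x.2)) (fun _ => g p.1 p.2)
      (cellSet m p.1 p.2) := fun x hx => by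
    obtain ⟨hp1, hp2⟩ := Finset.mem_product.1 hp
    simp only [cellIndex_eq_of_mem hp1 hx.1, cellIndex_eq_of_mem hp2 hx.2]
  rw [unitSq_eq_biUnion hm, integral_biUnion_finset _ (fun p _ => measurableSet_cellSet m _ _)
    (pairwiseDisjoint_cellSet m), Finset.mul_sum]
  · refine Finset.sum_congr rfl fun p hp => ?_
    rw [setIntegral_congr_fun (measurableSet_cellSet m _ _) (hconst hp), setIntegral_const,
      measureReal_cellSet, smul_eq_mul]
  · exact fun p hp => (integrableOn_const (volume_cellSet_lt_top _ _ _).ne).congr_fun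
      (hconst hp).symm (measurableSet_cellSet m _ _)

lemma ae_restrict_unitSq_mem_interior : ∀ᵐ x ∂volume.restrict unitSq, x ∈ interior unitSq := by
  rw [ae_restrict_iff' (s := unitSq) (measurableSet_Icc.prod measurableSet_Icc), ae_iff]
  refine measure_mono_null (fun x hx => ?_) ((convex_Icc 0 1).prod (convex_Icc 0 1)
    |>.addHaar_frontier volume)
  exact ⟨subset_closure (of_not_imp hx), fun h => hx fun _ => h⟩

def Near (r : ℕ) (p q : ℕ × ℕ) : Prop :=
  p.1 ≤ q.1 + r ∧ q.1 ≤ p.1 + r ∧ p.2 ≤ q.2 + r ∧ q.2 ≤ p.2 + r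

instance (r : ℕ) : DecidableRel (Near r) := fun p q => by unfold Near; infer_instance

lemma card_filter_near_le (m r : ℕ) (p : ℕ × ℕ) : #{q ∈ grid m | Near r p q} ≤ (2 * r + 1) ^ 2 :=
  calc #{q ∈ grid m | Near r p q} ≤ #(Icc (p.1 - r) (p.1 + r) ×ˢ Icc (p.2 - r) (p.2 + r)) :=
        card_le_card fun q hq => by
          obtain ⟨-, h1, h2, h3, h4⟩ := Finset.mem_filter.1 hq
          simp only [Finset.mem_product, Finset.mem_Icc]
          omega
    _ ≤ (2 * r + 1) ^ 2 := by
        rw [card_product, Nat.card_Icc, Nat.card_Icc, sq]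
        exact Nat.mul_le_mul (by omega) (by omega)

lemma abs_sub_le_of_mem_cellIv {m i k : ℕ} (hm : 0 < m) (hik : k ≤ i + 1) (hki : i ≤ k + 1)
    {s t : ℝ} (hs : s ∈ cellIv m k) (ht : t ∈ cellIv m i) : |s - t| ≤ 2 / m := by
  have hm' : (0 : ℝ) < m := by exact_mod_cast hm
  obtain ⟨hs1, hs2⟩ := cellIv_subset_Icc m k hs
  obtain ⟨ht1, ht2⟩ := cellIv_subset_Icc m i ht
  rw [div_le_iff₀' hm'] at hs1 ht1
  rw [le_div_iff₀' hm'] at hs2 ht2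
  have hik' : (k : ℝ) ≤ i + 1 := by exact_mod_cast hik
  have hki' : (i : ℝ) ≤ k + 1 := by exact_mod_cast hki
  rw [abs_sub_le_iff, le_div_iff₀' hm', le_div_iff₀' hm']
  constructor <;> linarith

lemma cellSet_subset_closedBall {m : ℕ} (hm : 0 < m) {p q : ℕ × ℕ} (hpq : Near 1 p q)
    {x : ℝ × ℝ} (hx : x ∈ cellSet m p.1 p.2) : cellSet m q.1 q.2 ⊆ Metric.closedBall x (2 / m) :=
  fun y hy => by
    obtain ⟨h1, h2, h3, h4⟩ := hpq
    rw [Metric.mem_closedBall, Prod.dist_eq, Real.dist_eq, Real.dist_eq]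
    exact max_le (abs_sub_le_of_mem_cellIv hm h2 h1 hy.1 hx.1)
      (abs_sub_le_of_mem_cellIv hm h4 h3 hy.2 hx.2)

lemma eventually_cellIndex_interior {t : ℝ} (ht : t ∈ Set.Ioo (0 : ℝ) 1) :
    ∀ᶠ m : ℕ in atTop, 2 ≤ cellIndex m t ∧ cellIndex m t + 1 ≤ m := by
  have hlo : ∀ᶠ m : ℕ in atTop, 2 ≤ (m : ℝ) * t :=
    (tendsto_natCast_atTop_atTop.atTop_mul_const ht.1).eventually_ge_atTop 2
  have hhi : ∀ᶠ m : ℕ in atTop, 2 ≤ (m : ℝ) * (1 - t) :=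
    (tendsto_natCast_atTop_atTop.atTop_mul_const (sub_pos.2 ht.2)).eventually_ge_atTop 2
  filter_upwards [hlo, hhi, eventually_gt_atTop 0] with m hlo hhi hm
  have hm' : (0 : ℝ) < m := by exact_mod_cast hm
  obtain ⟨h1, h2⟩ := cellIv_subset_Icc m _ (mem_cellIv_cellIndex hm ⟨ht.1.le, ht.2.le⟩)
  rw [div_le_iff₀' hm'] at h1
  rw [le_div_iff₀' hm'] at h2
  constructor
  · exact_mod_cast (by linarith : (2 : ℝ) ≤ cellIndex m t)
  · exact_mod_cast (by linarith : (cellIndex m t : ℝ) + 1 ≤ m)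

/-! ### Poisson tails -/

/-- `P(N < c)` for a Poisson random variable `N` with mean `a`. -/
def poissonProbLT (c : ℕ) (a : ℝ) : ℝ :=
  ∑ k ∈ range c, Real.exp (-a) * a ^ k / (Nat.factorial k : ℝ)

lemma poissonProbLT_nonneg (c : ℕ) {a : ℝ} (ha : 0 ≤ a) : 0 ≤ poissonProbLT c a :=
  Finset.sum_nonneg fun _ _ => by positivity

lemma poissonProbLT_le_one (c : ℕ) {a : ℝ} (ha : 0 ≤ a) : poissonProbLT c a ≤ 1 :=
  calc poissonProbLT c a = Real.exp (-a) * ∑ k ∈ range c, a ^ k / (Nat.factorial k : ℝ) := by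
        rw [poissonProbLT, Finset.mul_sum]; simp only [mul_div_assoc]
    _ ≤ Real.exp (-a) * Real.exp a := by gcongr; exact Real.sum_le_exp_of_nonneg ha c
    _ = 1 := by rw [← Real.exp_add, neg_add_cancel, Real.exp_zero]

lemma continuous_poissonProbLT (c : ℕ) : Continuous (poissonProbLT c) := by
  unfold poissonProbLT
  fun_prop

lemma poissonProbLT_mul_eq_qFun (c : ℕ) (κ : ℝ) (f : ℝ × ℝ → ℝ) (x : ℝ × ℝ) :
    poissonProbLT c (κ * f x) = qFun c κ f x :=
  Finset.sum_congr rfl fun k _ => by rw [mul_pow]; ring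

lemma measure_ge_eq_one_sub_poissonProbLT {Ω : Type*} {mΩ : MeasurableSpace Ω} {μ : Measure Ω}
    [IsProbabilityMeasure μ] {N : Ω → ℕ} (hN : Measurable N) {a : ℝ} (ha : 0 ≤ a)
    (hpmf : ∀ k : ℕ, μ {ω | N ω = k} =
      ENNReal.ofReal (Real.exp (-a) * a ^ k / (Nat.factorial k : ℝ))) (c : ℕ) :
    μ {ω | c ≤ N ω} = ENNReal.ofReal (1 - poissonProbLT c a) := by
  have hmeas (k : ℕ) : MeasurableSet {ω | N ω = k} := hN (measurableSet_singleton k)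
  have hge : MeasurableSet {ω | c ≤ N ω} := hN measurableSet_Ici
  have hlt : {ω | c ≤ N ω}ᶜ = ⋃ k ∈ range c, {ω | N ω = k} := by
    ext ω; simp
  have hlt_meas : μ {ω | c ≤ N ω}ᶜ = ENNReal.ofReal (poissonProbLT c a) := by
    rw [hlt, measure_biUnion_finset (fun k _ l _ hkl => Set.disjoint_left.2 fun ω h1 h2 =>
      hkl (h1.symm.trans h2)) (fun k _ => hmeas k),
      poissonProbLT, ENNReal.ofReal_sum_of_nonneg fun k _ => by positivity]
    exact Finset.sum_congr rfl fun k _ => hpmf k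
  rw [← compl_compl {ω | c ≤ N ω}, prob_compl_eq_one_sub hge.compl,
    hlt_meas, ENNReal.ofReal_sub _ (poissonProbLT_nonneg c ha), ENNReal.ofReal_one]

/-! ### The expected perimeter -/

/-- The summand `ψ(i, j)` of `perimSum`, written as a product so that it also makes sense for
grey-level images, in particular for the image of the probabilities `P(Z_{i,j} = 1)`. -/
def perimWeight (Z : ℕ → ℕ → ℝ) (i j : ℕ) : ℝ :=
  Z i j * (4 - (Z (i - 1) j + Z (i + 1) j + Z i (j - 1) + Z i (j + 1)))

lemma abs_perimWeight_le {Z : ℕ → ℕ → ℝ} (hZ : ∀ i j, Z i j ∈ Set.Icc (0 : ℝ) 1) (i j : ℕ) :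
    |perimWeight Z i j| ≤ 4 := by
  have h0 := hZ i j
  have h1 := hZ (i - 1) j
  have h2 := hZ (i + 1) j
  have h3 := hZ i (j - 1)
  have h4 := hZ i (j + 1)
  simp only [Set.mem_Icc] at h0 h1 h2 h3 h4
  rw [perimWeight, abs_le]
  constructor <;> nlinarith

def cellMean (f : ℝ × ℝ → ℝ) (lam : ℕ → ℝ) (m i j : ℕ) : ℝ :=
  lam m * ∫ x in cellSet m i j, f x

/-- `P(Z_{i,j} = 1)` (zero off the grid). -/
def blackProb (c : ℕ) (f : ℝ × ℝ → ℝ) (lam : ℕ → ℝ) (m i j : ℕ) : ℝ :=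
  if 1 ≤ i ∧ i ≤ m ∧ 1 ≤ j ∧ j ≤ m then 1 - poissonProbLT c (cellMean f lam m i j) else 0

def expectedPerim (c : ℕ) (f : ℝ × ℝ → ℝ) (lam : ℕ → ℝ) (m : ℕ) : ℝ :=
  1 / (m : ℝ) ^ 2 * ∑ p ∈ grid m, perimWeight (blackProb c f lam m) p.1 p.2

section ExpectedPerim

variable {c : ℕ} {κ : ℝ} {f : ℝ × ℝ → ℝ} {lam : ℕ → ℝ}

lemma cellMean_nonneg (hf : ∀ x ∈ unitSq, 0 ≤ f x) {m : ℕ} (hlam : 0 ≤ lam m) {p : ℕ × ℕ}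
    (hp : p ∈ grid m) : 0 ≤ cellMean f lam m p.1 p.2 :=
  mul_nonneg hlam <| setIntegral_nonneg (measurableSet_cellSet m _ _) fun x hx =>
    hf x (cellSet_subset_unitSq hp hx)

lemma blackProb_mem_Icc (hf : ∀ x ∈ unitSq, 0 ≤ f x) {m : ℕ} (hlam : 0 ≤ lam m) (i j : ℕ) :
    blackProb c f lam m i j ∈ Set.Icc (0 : ℝ) 1 := by
  unfold blackProb
  split_ifs with h
  · have ha := cellMean_nonneg (p := (i, j)) hf hlam (by simp [grid, h])
    exact ⟨sub_nonneg.2 (poissonProbLT_le_one c ha), sub_le_self _ (poissonProbLT_nonneg c ha)⟩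
  · exact ⟨le_rfl, zero_le_one⟩

lemma abs_sq_mul_setIntegral_cellSet_sub_le {m i j : ℕ} (hm : 0 < m)
    (hf : IntegrableOn f (cellSet m i j)) {x : ℝ × ℝ} {ε : ℝ}
    (hε : ∀ y ∈ cellSet m i j, |f y - f x| ≤ ε) :
    |(m : ℝ) ^ 2 * (∫ y in cellSet m i j, f y) - f x| ≤ ε := by
  have hm2 : (0 : ℝ) < (m : ℝ) ^ 2 := by positivity
  have hdiff : ∫ y in cellSet m i j, (f y - f x) = (∫ y in cellSet m i j, f y) - f x / m ^ 2 := by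
    rw [integral_sub hf (integrableOn_const (volume_cellSet_lt_top m i j).ne), setIntegral_const,
      measureReal_cellSet, smul_eq_mul, one_div_mul_eq_div]
  have hbound := norm_setIntegral_le_of_norm_le_const (f := fun y => f y - f x)
    (volume_cellSet_lt_top m i j) hε
  rw [hdiff, measureReal_cellSet, Real.norm_eq_abs] at hbound
  calc |(m : ℝ) ^ 2 * (∫ y in cellSet m i j, f y) - f x|
      = (m : ℝ) ^ 2 * |(∫ y in cellSet m i j, f y) - f x / m ^ 2| := by
        rw [← abs_of_pos hm2, ← abs_mul, abs_of_pos hm2, mul_sub, mul_div_cancel₀ _ hm2.ne']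
    _ ≤ (m : ℝ) ^ 2 * (ε * (1 / m ^ 2)) := by gcongr
    _ = ε := by field_simp

lemma tendsto_blackProb (hf : ContinuousOn f unitSq)
    (hreg : Tendsto (fun m => lam m / (m : ℝ) ^ 2) atTop (𝓝 κ)) {x : ℝ × ℝ} (hx : x ∈ unitSq)
    {u v : ℕ → ℕ} (huv : ∀ᶠ m in atTop, (u m, v m) ∈ grid m ∧
      Near 1 (cellIndex m x.1, cellIndex m x.2) (u m, v m)) :
    Tendsto (fun m => blackProb c f lam m (u m) (v m)) atTop
      (𝓝 (1 - qFun c κ f x)) := by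
  have hsq : Tendsto (fun m : ℕ => (m : ℝ) ^ 2 * ∫ y in cellSet m (u m) (v m), f y) atTop
      (𝓝 (f x)) := by
    rw [Metric.tendsto_nhds]
    intro ε hε
    obtain ⟨δ, hδ, hfδ⟩ := Metric.continuousWithinAt_iff.1 (hf x hx) (ε / 2) (half_pos hε)
    have hsmall : ∀ᶠ m : ℕ in atTop, 2 / (m : ℝ) < δ :=
      (tendsto_const_div_atTop_nhds_zero_nat 2).eventually (gt_mem_nhds hδ)
    filter_upwards [huv, hsmall, eventually_gt_atTop 0] with m ⟨hgrid, hnear⟩ hsmall hm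
    have hcell := cellSet_subset_unitSq hgrid
    have hball := cellSet_subset_closedBall hm hnear
      ⟨mem_cellIv_cellIndex hm hx.1, mem_cellIv_cellIndex hm hx.2⟩
    refine (abs_sq_mul_setIntegral_cellSet_sub_le hm
      ((hf.integrableOn_compact (isCompact_Icc.prod isCompact_Icc)).mono_set hcell)
      fun y hy => ?_).trans_lt (half_lt_self hε)
    rw [← Real.dist_eq]
    exact (hfδ (hcell hy) ((Metric.mem_closedBall.1 (hball hy)).trans_lt hsmall)).le
  have hmean : Tendsto (fun m => cellMean f lam m (u m) (v m)) atTop (𝓝 (κ * f x)) := by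
    refine (hreg.mul hsq).congr' ?_
    filter_upwards [eventually_gt_atTop 0] with m hm
    rw [cellMean]
    field_simp
  rw [← poissonProbLT_mul_eq_qFun]
  refine (tendsto_const_nhds.sub ((continuous_poissonProbLT c).tendsto _ |>.comp hmean)).congr' ?_
  filter_upwards [huv] with m ⟨hgrid, _⟩
  simp only [grid, Finset.mem_product, Finset.mem_Icc] at hgrid
  simp [blackProb, hgrid]

lemma tendsto_perimWeight_blackProb (hf : ContinuousOn f unitSq)
    (hreg : Tendsto (fun m => lam m / (m : ℝ) ^ 2) atTop (𝓝 κ)) {x : ℝ × ℝ}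
    (hx : x ∈ interior unitSq) :
    Tendsto (fun m => perimWeight (blackProb c f lam m) (cellIndex m x.1) (cellIndex m x.2))
      atTop (𝓝 (4 * (qFun c κ f x - qFun c κ f x ^ 2))) := by
  have hx' : x.1 ∈ Set.Ioo 0 1 ∧ x.2 ∈ Set.Ioo 0 1 := by
    rwa [unitSq, interior_prod_eq, interior_Icc] at hx
  have hinner := (eventually_cellIndex_interior hx'.1).and (eventually_cellIndex_interior hx'.2)
  have hnbr (a b : ℕ → ℕ → ℕ) (hab : ∀ i j, 2 ≤ i → 2 ≤ j → Near 1 (i, j) (a i j, b i j)) :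
      Tendsto (fun m => blackProb c f lam m (a (cellIndex m x.1) (cellIndex m x.2))
        (b (cellIndex m x.1) (cellIndex m x.2))) atTop (𝓝 (1 - qFun c κ f x)) := by
    refine tendsto_blackProb hf hreg (interior_subset hx) (hinner.mono fun m hm => ?_)
    have hn := hab _ _ hm.1.1 hm.2.1
    refine ⟨?_, hn⟩
    simp only [grid, Finset.mem_product, Finset.mem_Icc, Near] at hn hm ⊢
    omega
  have hC := hnbr (fun i _ => i) (fun _ j => j) fun i j _ _ => by simp only [Near]; omega
  have hL := hnbr (fun i _ => i - 1) (fun _ j => j) fun i j _ _ => by simp only [Near]; omega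
  have hR := hnbr (fun i _ => i + 1) (fun _ j => j) fun i j _ _ => by simp only [Near]; omega
  have hD := hnbr (fun i _ => i) (fun _ j => j - 1) fun i j _ _ => by simp only [Near]; omega
  have hU := hnbr (fun i _ => i) (fun _ j => j + 1) fun i j _ _ => by simp only [Near]; omega
  convert hC.mul (tendsto_const_nhds (x := (4 : ℝ)).sub (((hL.add hR).add hD).add hU)) using 2
  · rfl
  · ring

theorem tendsto_expectedPerim (hf_cont : ContinuousOn f unitSq)
    (hf_nonneg : ∀ x ∈ unitSq, 0 ≤ f x) (hlam : ∀ᶠ m in atTop, 0 ≤ lam m)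
    (hreg : Tendsto (fun m => lam m / (m : ℝ) ^ 2) atTop (𝓝 κ)) :
    Tendsto (expectedPerim c f lam) atTop
      (𝓝 (4 * ((∫ x in unitSq, qFun c κ f x) - ∫ x in unitSq, qFun c κ f x ^ 2))) := by
  have hcompact : IsCompact unitSq := isCompact_Icc.prod isCompact_Icc
  have hq : ContinuousOn (qFun c κ f) unitSq := by unfold qFun; fun_prop
  have hq2 : ContinuousOn (fun x => qFun c κ f x ^ 2) unitSq := hq.pow 2
  rw [← integral_sub (hq.integrableOn_compact hcompact)
    (hq2.integrableOn_compact hcompact), ← integral_const_mul]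
  refine (tendsto_integral_filter_of_dominated_convergence (F := fun m x =>
    perimWeight (blackProb c f lam m) (cellIndex m x.1) (cellIndex m x.2)) (fun _ => 4) ?_ ?_
    (integrableOn_const hcompact.measure_lt_top.ne) ?_).congr' ?_
  · exact Eventually.of_forall fun m => (measurable_of_countable
      (fun p : ℕ × ℕ => perimWeight (blackProb c f lam m) p.1 p.2) |>.comp
      ((measurable_cellIndex m).comp measurable_fst |>.prodMk
        ((measurable_cellIndex m).comp measurable_snd))).aestronglyMeasurable
  · filter_upwards [hlam] with m hm
    exact Eventually.of_forall fun x =>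
      abs_perimWeight_le (fun i j => blackProb_mem_Icc hf_nonneg hm i j) _ _
  · filter_upwards [ae_restrict_unitSq_mem_interior] with x hx
    exact tendsto_perimWeight_blackProb hf_cont hreg hx
  · filter_upwards [eventually_gt_atTop 0] with m hm
    exact integral_unitSq_comp_cellIndex hm _

end ExpectedPerim

/-! ### Second-moment bounds -/

section SecondMoment

variable {Ω : Type*} {mΩ : MeasurableSpace Ω} {μ : Measure Ω} [IsProbabilityMeasure μ]

lemma covariance_le_of_abs_le {X Y : Ω → ℝ} {B : ℝ} (hX : AEStronglyMeasurable X μ)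
    (hY : AEStronglyMeasurable Y μ) (hXB : ∀ ω, |X ω| ≤ B) (hYB : ∀ ω, |Y ω| ≤ B) :
    cov[X, Y; μ] ≤ 2 * B ^ 2 := by
  have habs {Z : Ω → ℝ} {C : ℝ} (hZC : ∀ ω, |Z ω| ≤ C) : |μ[Z]| ≤ C := by
    simpa using norm_integral_le_of_norm_le_const (μ := μ) (f := Z)
      (Eventually.of_forall fun ω => (Real.norm_eq_abs _).trans_le (hZC ω))
  have hXY : |μ[X * Y]| ≤ B ^ 2 := habs fun ω => by
    rw [Pi.mul_apply, abs_mul, sq]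
    exact mul_le_mul (hXB ω) (hYB ω) (abs_nonneg _) ((abs_nonneg _).trans (hXB ω))
  have hB : 0 ≤ B := (abs_nonneg _).trans (habs hXB)
  have hprod : -(μ[X] * μ[Y]) ≤ B ^ 2 := by
    calc -(μ[X] * μ[Y]) ≤ |μ[X]| * |μ[Y]| := by rw [← abs_mul]; exact neg_le_abs _
      _ ≤ B ^ 2 := by rw [sq]; exact mul_le_mul (habs hXB) (habs hYB) (abs_nonneg _) hB
  rw [covariance_eq_sub (MemLp.of_bound hX B (Eventually.of_forall hXB))
    (MemLp.of_bound hY B (Eventually.of_forall hYB))]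
  linarith [(abs_le.1 hXY).2]

/-- Independent pairs have zero covariance, so only the pairs related by `R` contribute. -/
theorem variance_sum_le_of_indepFun {ι : Type*} (s : Finset ι) {X : ι → Ω → ℝ} {B : ℝ}
    (R : ι → ι → Prop) [DecidableRel R] (hX : ∀ i, AEStronglyMeasurable (X i) μ)
    (hB : ∀ i ω, |X i ω| ≤ B) (hindep : ∀ i ∈ s, ∀ j ∈ s, ¬R i j → IndepFun (X i) (X j) μ) :
    Var[fun ω => ∑ i ∈ s, X i ω; μ] ≤ 2 * B ^ 2 * ∑ i ∈ s, (#{j ∈ s | R i j} : ℝ) := by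
  have hmem (i : ι) : MemLp (X i) 2 μ := MemLp.of_bound (hX i) B (Eventually.of_forall (hB i))
  rw [variance_fun_sum' fun i _ => hmem i, Finset.mul_sum]
  refine Finset.sum_le_sum fun i hi => ?_
  rw [Finset.card_filter, Nat.cast_sum, Finset.mul_sum]
  refine Finset.sum_le_sum fun j hj => ?_
  by_cases hij : R i j
  · simpa [hij] using covariance_le_of_abs_le (hX i) (hX j) (hB i) (hB j)
  · simp [hij, (hindep i hi j hj hij).covariance_eq_zero (hmem i) (hmem j)]

/-- Chebyshev's inequality and the Borel–Cantelli lemma. -/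
theorem ae_tendsto_sub_integral_of_summable_variance {X : ℕ → Ω → ℝ}
    (hX : ∀ n, MemLp (X n) 2 μ) (hvar : Summable fun n => Var[X n; μ]) :
    ∀ᵐ ω ∂μ, Tendsto (fun n => X n ω - μ[X n]) atTop (𝓝 0) := by
  have hdev (k : ℕ) : ∀ᵐ ω ∂μ, ∀ᶠ n in atTop,
      ω ∉ {ω | 1 / ((k : ℝ) + 1) ≤ |X n ω - μ[X n]|} := by
    refine ae_eventually_notMem (ne_top_of_le_ne_top ?_ (ENNReal.tsum_le_tsum fun n =>
      meas_ge_le_variance_div_sq (hX n) Nat.one_div_pos_of_nat))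
    rw [← ENNReal.ofReal_tsum_of_nonneg
      (fun n => div_nonneg (variance_nonneg _ _) (sq_nonneg _)) (hvar.div_const _)]
    exact ENNReal.ofReal_ne_top
  filter_upwards [ae_all_iff.2 hdev] with ω hω
  refine Metric.tendsto_atTop.2 fun ε hε => ?_
  obtain ⟨k, hk⟩ := exists_nat_one_div_lt hε
  obtain ⟨N, hN⟩ := eventually_atTop.1 (hω k)
  refine ⟨N, fun n hn => ?_⟩
  rw [Real.dist_eq, sub_zero]
  exact (not_le.1 (hN n hn)).trans hk

end SecondMoment

/-! ### The random image -/

lemma binZ_mem_Icc (c m : ℕ) (Y : ℕ → ℕ → ℕ) (i j : ℕ) :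
    binZ c m Y i j ∈ Set.Icc (0 : ℝ) 1 := by
  unfold binZ; split <;> norm_num

lemma binZ_of_notMem_grid {c m : ℕ} (Y : ℕ → ℕ → ℕ) {i j : ℕ} (h : (i, j) ∉ grid m) :
    binZ c m Y i j = 0 := by
  simp only [grid, Finset.mem_product, Finset.mem_Icc, not_and_or, not_le] at h
  rw [binZ, if_neg (by omega)]

lemma perimSum_binZ (c m : ℕ) (Y : ℕ → ℕ → ℕ) :
    1 / (m : ℝ) * perimSum m (binZ c m Y) =
      1 / (m : ℝ) ^ 2 * ∑ p ∈ grid m, perimWeight (binZ c m Y) p.1 p.2 := by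
  have hterm (i j : ℕ) : (if binZ c m Y i j = 1 then 4 - (binZ c m Y (i - 1) j +
      binZ c m Y (i + 1) j + binZ c m Y i (j - 1) + binZ c m Y i (j + 1)) else 0) =
      perimWeight (binZ c m Y) i j := by
    have h01 : binZ c m Y i j = 0 ∨ binZ c m Y i j = 1 := by unfold binZ; split <;> simp
    rcases h01 with h | h <;> simp [perimWeight, h]
  simp only [perimSum, hterm, grid, Finset.sum_product]
  ring

section RandomImage

variable {Ω : Type*} {mΩ : MeasurableSpace Ω} {μ : Measure Ω} {c m : ℕ} {W : ℕ → ℕ → Ω → ℕ}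

abbrev countSigma (m : ℕ) (W : ℕ → ℕ → Ω → ℕ) (S : Set (ℕ × ℕ)) : MeasurableSpace Ω :=
  ⨆ q ∈ {q : grid m | q.1 ∈ S}, MeasurableSpace.comap (fun ω => W q.1.1 q.1.2 ω) inferInstance

lemma indepFun_of_measurable_countSigma (hW : ∀ i j, Measurable (W i j))
    (hind : iIndepFun (fun q : grid m => fun ω => W q.1.1 q.1.2 ω) μ)
    {S T : Set (ℕ × ℕ)} (hST : Disjoint S T) {X Y : Ω → ℝ}
    (hX : Measurable[countSigma m W S] X) (hY : Measurable[countSigma m W T] Y) :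
    IndepFun X Y μ := by
  have hdisj : Disjoint {q : grid m | q.1 ∈ S} {q : grid m | q.1 ∈ T} :=
    Set.disjoint_left.2 fun _ hS hT => Set.disjoint_left.1 hST hS hT
  exact (IndepFun_iff_Indep X Y μ).2 <| indep_of_indep_of_le
    (indep_iSup_of_disjoint (fun q => (hW _ _).comap_le) hind.iIndep hdisj)
    hX.comap_le hY.comap_le

lemma measurable_binZ_countSigma {S : Set (ℕ × ℕ)} {q : ℕ × ℕ} (hq : q ∈ S) :
    Measurable[countSigma m W S] fun ω => binZ c m (fun i j => W i j ω) q.1 q.2 := by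
  by_cases hgrid : q ∈ grid m
  · have hWq : Measurable[countSigma m W S] (W q.1 q.2) :=
      (comap_measurable _).mono (le_iSup₂ (f := fun (r : grid m) (_ : r.1 ∈ S) =>
        MeasurableSpace.comap (fun ω => W r.1.1 r.1.2 ω) inferInstance) ⟨q, hgrid⟩ hq) le_rfl
    exact (measurable_of_countable fun n : ℕ => binZ c m (fun _ _ => n) q.1 q.2).comp hWq
  · simp only [binZ_of_notMem_grid _ hgrid]
    exact measurable_const

lemma measurable_binZ (hW : ∀ i j, Measurable (W i j)) (i j : ℕ) :
    Measurable fun ω => binZ c m (fun a b => W a b ω) i j :=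
  (measurable_of_countable fun n : ℕ => binZ c m (fun _ _ => n) i j).comp (hW i j)

lemma indepFun_binZ (hW : ∀ i j, Measurable (W i j))
    (hind : iIndepFun (fun q : grid m => fun ω => W q.1.1 q.1.2 ω) μ) {p q : ℕ × ℕ}
    (hpq : p ≠ q) :
    IndepFun (fun ω => binZ c m (fun i j => W i j ω) p.1 p.2)
      (fun ω => binZ c m (fun i j => W i j ω) q.1 q.2) μ :=
  indepFun_of_measurable_countSigma hW hind (Set.disjoint_singleton.2 hpq)
    (measurable_binZ_countSigma rfl) (measurable_binZ_countSigma rfl)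

def HasPoissonCounts (μ : Measure Ω) (f : ℝ × ℝ → ℝ) (lam : ℕ → ℝ) (m : ℕ)
    (W : ℕ → ℕ → Ω → ℕ) : Prop :=
  ∀ i ∈ Icc 1 m, ∀ j ∈ Icc 1 m, ∀ k : ℕ, μ {ω | W i j ω = k} =
    ENNReal.ofReal (Real.exp (-cellMean f lam m i j) * cellMean f lam m i j ^ k /
      (Nat.factorial k : ℝ))

variable [IsProbabilityMeasure μ] {f : ℝ × ℝ → ℝ} {lam : ℕ → ℝ}

lemma integral_binZ (hW : ∀ i j, Measurable (W i j)) (hpois : HasPoissonCounts μ f lam m W)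
    (hf : ∀ x ∈ unitSq, 0 ≤ f x) (hlam : 0 ≤ lam m) (i j : ℕ) :
    μ[fun ω => binZ c m (fun a b => W a b ω) i j] = blackProb c f lam m i j := by
  by_cases hp : (i, j) ∈ grid m
  · obtain ⟨hi, hj⟩ := Finset.mem_product.1 hp
    have hZ : (fun ω => binZ c m (fun a b => W a b ω) i j) = {ω | c ≤ W i j ω}.indicator 1 := by
      ext ω
      simp only [Finset.mem_Icc] at hi hj
      simp [binZ, Set.indicator_apply, hi, hj]
    have ha := cellMean_nonneg hf hlam hp
    have hge : MeasurableSet {ω | c ≤ W i j ω} := hW i j measurableSet_Ici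
    rw [hZ, integral_indicator_one hge, measureReal_def,
      measure_ge_eq_one_sub_poissonProbLT (hW i j) ha (hpois i hi j hj) c,
      ENNReal.toReal_ofReal (sub_nonneg.2 (poissonProbLT_le_one c ha))]
    simp only [Finset.mem_Icc] at hi hj
    simp [blackProb, hi, hj]
  · simp only [binZ_of_notMem_grid _ hp, integral_zero]
    simp only [grid, Finset.mem_product, Finset.mem_Icc, not_and_or, not_le] at hp
    rw [blackProb, if_neg (by omega)]

lemma integral_perimWeight_binZ (hW : ∀ i j, Measurable (W i j))
    (hind : iIndepFun (fun q : grid m => fun ω => W q.1.1 q.1.2 ω) μ)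
    (hpois : HasPoissonCounts μ f lam m W) (hf : ∀ x ∈ unitSq, 0 ≤ f x) (hlam : 0 ≤ lam m)
    {p : ℕ × ℕ} (hp : p ∈ grid m) :
    μ[fun ω => perimWeight (binZ c m fun a b => W a b ω) p.1 p.2] =
      perimWeight (blackProb c f lam m) p.1 p.2 := by
  obtain ⟨i, j⟩ := p
  have hij : 1 ≤ i ∧ 1 ≤ j := by
    simp only [grid, Finset.mem_product, Finset.mem_Icc] at hp; omega
  set Z : ℕ → ℕ → Ω → ℝ := fun a b ω => binZ c m (fun i j => W i j ω) a b with hZ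
  have hint {X : Ω → ℝ} (hX : Measurable X) (hX1 : ∀ ω, X ω ∈ unitInterval) : Integrable X μ :=
    .of_bound hX.aestronglyMeasurable 1 (Eventually.of_forall fun ω => by
      rw [Real.norm_eq_abs, abs_le]; constructor <;> linarith [(hX1 ω).1, (hX1 ω).2])
  have hZ01 (a b : ℕ) (ω : Ω) : Z a b ω ∈ unitInterval := binZ_mem_Icc _ _ _ _ _
  have hZint (a b : ℕ) : Integrable (Z a b) μ := hint (measurable_binZ hW a b) (hZ01 a b)
  have hprod (a b : ℕ) (hab : (i, j) ≠ (a, b)) :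
      Integrable (fun ω => Z i j ω * Z a b ω) μ ∧
        μ[fun ω => Z i j ω * Z a b ω] = blackProb c f lam m i j * blackProb c f lam m a b := by
    refine ⟨hint ((measurable_binZ hW i j).mul (measurable_binZ hW a b))
      fun ω => unitInterval.mul_mem (hZ01 i j ω) (hZ01 a b ω), ?_⟩
    rw [(indepFun_binZ hW hind hab).integral_fun_mul_eq_mul_integral
      (hZint i j).aestronglyMeasurable (hZint a b).aestronglyMeasurable,
      integral_binZ hW hpois hf hlam, integral_binZ hW hpois hf hlam]
  obtain ⟨hL, hL'⟩ := hprod (i - 1) j (by simp; omega)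
  obtain ⟨hR, hR'⟩ := hprod (i + 1) j (by simp)
  obtain ⟨hD, hD'⟩ := hprod i (j - 1) (by simp; omega)
  obtain ⟨hU, hU'⟩ := hprod i (j + 1) (by simp)
  calc μ[fun ω => perimWeight (binZ c m fun a b => W a b ω) i j]
      = μ[fun ω => (4 : ℝ) * Z i j ω - Z i j ω * Z (i - 1) j ω - Z i j ω * Z (i + 1) j ω -
          Z i j ω * Z i (j - 1) ω - Z i j ω * Z i (j + 1) ω] := by
        congr 1; ext ω; simp only [perimWeight, hZ]; ring
    _ = (4 : ℝ) * μ[Z i j] - μ[fun ω => Z i j ω * Z (i - 1) j ω] -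
          μ[fun ω => Z i j ω * Z (i + 1) j ω] - μ[fun ω => Z i j ω * Z i (j - 1) ω] -
          μ[fun ω => Z i j ω * Z i (j + 1) ω] := by
        rw [integral_sub, integral_sub, integral_sub, integral_sub, integral_const_mul] <;>
          fun_prop
    _ = perimWeight (blackProb c f lam m) i j := by
        rw [hL', hR', hD', hU', integral_binZ hW hpois hf hlam, perimWeight]
        ring

lemma measurable_perimWeight_countSigma (p : ℕ × ℕ) :
    Measurable[countSigma m W {q | Near 1 p q}]
      fun ω => perimWeight (binZ c m fun a b => W a b ω) p.1 p.2 := by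
  have h (q : ℕ × ℕ) (hq : Near 1 p q) :=
    measurable_binZ_countSigma (c := c) (m := m) (W := W) (S := {q | Near 1 p q}) hq
  exact (h p (by simp only [Near]; omega)).mul (measurable_const.sub
    ((((h (p.1 - 1, p.2) (by simp only [Near]; omega)).add
      (h (p.1 + 1, p.2) (by simp only [Near]; omega))).add
      (h (p.1, p.2 - 1) (by simp only [Near]; omega))).add
      (h (p.1, p.2 + 1) (by simp only [Near]; omega))))

lemma memLp_perimWeight_binZ (hW : ∀ i j, Measurable (W i j)) (p : ℕ × ℕ) :
    MemLp (fun ω => perimWeight (binZ c m fun a b => W a b ω) p.1 p.2) 2 μ :=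
  .of_bound ((measurable_perimWeight_countSigma p).mono
    (iSup₂_le fun _ _ => (hW _ _).comap_le) le_rfl).aestronglyMeasurable 4
    (Eventually.of_forall fun _ => abs_perimWeight_le (binZ_mem_Icc c m _) _ _)

/-- `(1/m) P_m`, written as in `perimSum_binZ`. -/
def normPerim (c m : ℕ) (W : ℕ → ℕ → Ω → ℕ) : Ω → ℝ := fun ω =>
  1 / (m : ℝ) ^ 2 * ∑ p ∈ grid m, perimWeight (binZ c m fun a b => W a b ω) p.1 p.2

lemma memLp_normPerim (hW : ∀ i j, Measurable (W i j)) : MemLp (normPerim c m W) 2 μ :=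
  (memLp_finsetSum _ fun p _ => memLp_perimWeight_binZ hW p).const_mul _

lemma integral_normPerim (hW : ∀ i j, Measurable (W i j))
    (hind : iIndepFun (fun q : grid m => fun ω => W q.1.1 q.1.2 ω) μ)
    (hpois : HasPoissonCounts μ f lam m W) (hf : ∀ x ∈ unitSq, 0 ≤ f x) (hlam : 0 ≤ lam m) :
    μ[normPerim c m W] = expectedPerim c f lam m := by
  unfold normPerim
  rw [integral_const_mul, integral_finsetSum _ fun p _ =>
    (memLp_perimWeight_binZ hW p).integrable one_le_two, expectedPerim]
  exact congrArg _ <| Finset.sum_congr rfl fun p hp =>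
    integral_perimWeight_binZ hW hind hpois hf hlam hp

/-- `ψ(p)` is a function of the counts at sup-distance at most one from `p`, so `ψ(p)` and `ψ(q)`
are independent unless `Near 2 p q`. -/
lemma variance_normPerim_le (hW : ∀ i j, Measurable (W i j))
    (hind : iIndepFun (fun q : grid m => fun ω => W q.1.1 q.1.2 ω) μ) :
    Var[normPerim c m W; μ] ≤ 800 / (m : ℝ) ^ 2 := by
  have hsum := variance_sum_le_of_indepFun (μ := μ) (grid m) (Near 2)
    (fun p => (memLp_perimWeight_binZ (c := c) hW p).aestronglyMeasurable)
    (fun p ω => abs_perimWeight_le (binZ_mem_Icc c m _) p.1 p.2)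
    fun p _ q _ hpq => indepFun_of_measurable_countSigma hW hind
      (Set.disjoint_left.2 fun s hp hq => hpq <| by
        simp only [Near, Set.mem_ofPred_eq] at hp hq ⊢
        omega)
      (measurable_perimWeight_countSigma p) (measurable_perimWeight_countSigma q)
  have hcount : ∑ p ∈ grid m, (#{q ∈ grid m | Near 2 p q} : ℝ) ≤ 25 * (m : ℝ) ^ 2 :=
    calc ∑ p ∈ grid m, (#{q ∈ grid m | Near 2 p q} : ℝ) ≤ ∑ p ∈ grid m, (25 : ℝ) :=
          Finset.sum_le_sum fun p _ => by exact_mod_cast card_filter_near_le m 2 p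
      _ = 25 * (m : ℝ) ^ 2 := by simp [grid, sq, mul_comm]
  unfold normPerim
  rw [variance_const_mul]
  calc (1 / (m : ℝ) ^ 2) ^ 2 * Var[fun ω => ∑ p ∈ grid m,
        perimWeight (binZ c m fun a b => W a b ω) p.1 p.2; μ]
      ≤ (1 / (m : ℝ) ^ 2) ^ 2 * (2 * 4 ^ 2 * (25 * (m : ℝ) ^ 2)) := by gcongr; linarith
    _ ≤ 800 / (m : ℝ) ^ 2 := by
        rcases eq_or_ne (m : ℝ) 0 with hm | hm
        · simp [hm]
        · field_simp; norm_num

end RandomImage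

end PoissonPerimeter

open PoissonPerimeter

theorem perimeter_limit_alternative_general
    {Ω : Type*} [MeasureSpace Ω] [IsProbabilityMeasure (ℙ : Measure Ω)]
    (c : ℕ) (κ : ℝ)
    (f : ℝ × ℝ → ℝ)
    (hf_cont : ContinuousOn f unitSq)
    (hf_nonneg : ∀ x ∈ unitSq, 0 ≤ f x)
    (lam : ℕ → ℝ) (hlam0 : ∀ m, 3 ≤ m → 0 < lam m)
    (hreg : Tendsto (fun m => lam m / (m : ℝ) ^ 2) atTop (nhds κ))
    (Y : ℕ → ℕ → ℕ → Ω → ℕ)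
    (hmeas : ∀ m i j, Measurable (Y m i j))
    (hpois : ∀ m, 3 ≤ m → ∀ i ∈ Finset.Icc 1 m, ∀ j ∈ Finset.Icc 1 m, ∀ k : ℕ,
      ℙ {ω | Y m i j ω = k} =
        ENNReal.ofReal (Real.exp (-(lam m * ∫ x in cellSet m i j, f x)) *
          (lam m * ∫ x in cellSet m i j, f x) ^ k / (Nat.factorial k : ℝ)))
    (hind : ∀ m, 3 ≤ m → iIndepFun
      (fun q : (Finset.Icc 1 m ×ˢ Finset.Icc 1 m : Finset (ℕ × ℕ)) =>
        fun ω => Y m q.1.1 q.1.2 ω) ℙ) :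
    ∀ᵐ ω ∂ℙ, Tendsto
      (fun m : ℕ => (1 / (m : ℝ)) * perimSum m (binZ c m (fun i j => Y m i j ω)))
      atTop (nhds (4 * ((∫ x in unitSq, qFun c κ f x) -
        ∫ x in unitSq, (qFun c κ f x) ^ 2))) := by
  have hmean : ∀ᶠ m in atTop, ℙ[normPerim c m (Y m)] = expectedPerim c f lam m :=
    (eventually_ge_atTop 3).mono fun m hm =>
      integral_normPerim (hmeas m) (hind m hm) (hpois m hm) hf_nonneg (hlam0 m hm).le
  have hvar : Summable fun m => Var[normPerim c m (Y m); ℙ] :=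
    ((Real.summable_one_div_nat_pow.2 one_lt_two).mul_left 800).of_norm_bounded_eventually_nat <|
      (eventually_ge_atTop 3).mono fun m hm => by
        rw [Real.norm_of_nonneg (variance_nonneg _ _), mul_one_div]
        exact variance_normPerim_le (hmeas m) (hind m hm)
  have hlim := tendsto_expectedPerim (c := c) hf_cont hf_nonneg
    ((eventually_ge_atTop 3).mono fun m hm => (hlam0 m hm).le) hreg
  filter_upwards [ae_tendsto_sub_integral_of_summable_variance
    (fun m => memLp_normPerim (hmeas m)) hvar] with ω hω
  have hsum := hω.add (hlim.congr' (hmean.mono fun m h => h.symm))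
  rw [zero_add] at hsum
  exact hsum.congr fun m => by rw [sub_add_cancel, perimSum_binZ]; rfl

/-- Under an inhomogeneous Poisson point process with intensity `λ_m f` and the limiting
regime, the normalized scaled perimeter converges almost surely:
`(1/m) P_m → 4(∫ q_{c,κ,f} - ∫ q_{c,κ,f}²)`. -/
theorem perimeter_limit_alternative
    {Ω : Type*} [MeasureSpace Ω] [IsProbabilityMeasure (ℙ : Measure Ω)]
    (c : ℕ) (hc : 1 ≤ c) (κ : ℝ) (hκ : 0 < κ)
    (f : ℝ × ℝ → ℝ)
    (hf_cont : ContinuousOn f unitSq)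
    (hf_nonneg : ∀ x ∈ unitSq, 0 ≤ f x)
    (hf_prob : ∫ x in unitSq, f x = 1)
    (lam : ℕ → ℝ) (hlam0 : ∀ m, 3 ≤ m → 0 < lam m)
    (hlam : Tendsto lam atTop atTop)
    (hreg : Tendsto (fun m => lam m / (m : ℝ) ^ 2) atTop (nhds κ))
    (Y : ℕ → ℕ → ℕ → Ω → ℕ)
    (hmeas : ∀ m i j, Measurable (Y m i j))
    (hpois : ∀ m, 3 ≤ m → ∀ i ∈ Finset.Icc 1 m, ∀ j ∈ Finset.Icc 1 m, ∀ k : ℕ,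
      ℙ {ω | Y m i j ω = k} =
        ENNReal.ofReal (Real.exp (-(lam m * ∫ x in cellSet m i j, f x)) *
          (lam m * ∫ x in cellSet m i j, f x) ^ k / (Nat.factorial k : ℝ)))
    (hind : ∀ m, 3 ≤ m → iIndepFun
      (fun q : (Finset.Icc 1 m ×ˢ Finset.Icc 1 m : Finset (ℕ × ℕ)) =>
        fun ω => Y m q.1.1 q.1.2 ω) ℙ) :
    ∀ᵐ ω ∂ℙ, Tendsto
      (fun m : ℕ => (1 / (m : ℝ)) * perimSum m (binZ c m (fun i j => Y m i j ω)))
      atTop (nhds (4 * ((∫ x in unitSq, qFun c κ f x) -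
        ∫ x in unitSq, (qFun c κ f x) ^ 2))) :=
  perimeter_limit_alternative_general c κ f hf_cont hf_nonneg lam hlam0 hreg Y hmeas hpois hind
end
end

section
/- For c = 1 the limiting normalized area is maximized exactly by the uniform density: for every continuous probability density f : [0,1]² → [0,∞) with ∫_{[0,1]²} f(x) dx = 1 and every κ > 0, one has ∫_{[0,1]²} (1 − e^{−κ f(x)}) dx ≤ 1 − e^{−κ}, with equality if and only if f(x) = 1 for all x ∈ [0,1]². -/
/-!
Since `t ↦ 1 - e^{-κt}` is concave, it lies below its tangent line at `t = 1`, and the gap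
`e^{-κt} - e^{-κ}(1 + κ(1 - t)) = e^{-κ}(e^{κ(1-t)} - (1 + κ(1 - t)))` vanishes only at
`t = 1`. Integrating against a probability density with mean `1` kills the linear term, so the
area is `1 - e^{-κ}` minus the integral of a nonnegative gap; it equals `1 - e^{-κ}` iff the gap
vanishes almost everywhere, i.e. `f = 1` a.e., which for continuous `f` means everywhere on the
square.
-/

open MeasureTheory

noncomputable section

open Real

lemma exp_neg_mul_eq_mul_exp (κ t : ℝ) : exp (-(κ * t)) = exp (-κ) * exp (κ * (1 - t)) := by
  rw [← exp_add]
  ring_nf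

lemma exp_neg_mul_tangent_le (κ t : ℝ) : exp (-κ) * (1 + κ * (1 - t)) ≤ exp (-(κ * t)) := by
  rw [exp_neg_mul_eq_mul_exp, add_comm 1]
  exact mul_le_mul_of_nonneg_left (add_one_le_exp _) (exp_pos _).le

lemma exp_neg_mul_tangent_eq_iff {κ : ℝ} (hκ : κ ≠ 0) (t : ℝ) :
    exp (-κ) * (1 + κ * (1 - t)) = exp (-(κ * t)) ↔ t = 1 := by
  rw [exp_neg_mul_eq_mul_exp, mul_right_inj' (exp_ne_zero _), add_comm 1]
  constructor
  · intro h
    by_contra ht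
    have hu : κ * (1 - t) ≠ 0 := mul_ne_zero hκ (sub_ne_zero.2 (Ne.symm ht))
    exact (add_one_lt_exp hu).ne h
  · rintro rfl
    simp

section ProbabilityMeasure

variable {α : Type*} [MeasurableSpace α] {μ : Measure α} [IsProbabilityMeasure μ] {f : α → ℝ}
  {κ : ℝ}

lemma integrable_exp_neg_mul_tangent (hf : Integrable f μ) :
    Integrable (fun x ↦ exp (-κ) * (1 + κ * (1 - f x))) μ :=
  ((integrable_const 1).add (((integrable_const 1).sub hf).const_mul κ)).const_mul _

lemma integral_one_sub_exp_neg_mul_eq_sub_integral_gap (hf : Integrable f μ)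
    (hf_mean : ∫ x, f x ∂μ = 1) (hexp : Integrable (fun x ↦ exp (-(κ * f x))) μ) :
    ∫ x, (1 - exp (-(κ * f x))) ∂μ =
      (1 - exp (-κ)) - ∫ x, (exp (-(κ * f x)) - exp (-κ) * (1 + κ * (1 - f x))) ∂μ := by
  have hdev : Integrable (fun x ↦ κ * (1 - f x)) μ := ((integrable_const 1).sub hf).const_mul κ
  rw [integral_sub (integrable_const _) hexp,
    integral_sub hexp (integrable_exp_neg_mul_tangent hf), integral_const_mul,
    integral_add (integrable_const _) hdev, integral_const_mul,
    integral_sub (integrable_const _) hf, hf_mean]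
  simp

lemma integral_one_sub_exp_neg_mul_le (hf : Integrable f μ) (hf_mean : ∫ x, f x ∂μ = 1)
    (hexp : Integrable (fun x ↦ exp (-(κ * f x))) μ) :
    ∫ x, (1 - exp (-(κ * f x))) ∂μ ≤ 1 - exp (-κ) := by
  rw [integral_one_sub_exp_neg_mul_eq_sub_integral_gap hf hf_mean hexp]
  exact sub_le_self _ (integral_nonneg fun x ↦ sub_nonneg.2 (exp_neg_mul_tangent_le κ (f x)))

lemma integral_one_sub_exp_neg_mul_eq_iff (hκ : κ ≠ 0) (hf : Integrable f μ)
    (hf_mean : ∫ x, f x ∂μ = 1) (hexp : Integrable (fun x ↦ exp (-(κ * f x))) μ) :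
    ∫ x, (1 - exp (-(κ * f x))) ∂μ = 1 - exp (-κ) ↔ f =ᵐ[μ] 1 := by
  rw [integral_one_sub_exp_neg_mul_eq_sub_integral_gap hf hf_mean hexp, sub_eq_self,
    integral_eq_zero_iff_of_nonneg (fun x ↦ sub_nonneg.2 (exp_neg_mul_tangent_le κ (f x)))
      (hexp.sub (integrable_exp_neg_mul_tangent hf))]
  refine Filter.eventually_congr (.of_forall fun x ↦ ?_)
  rw [Pi.zero_apply, Pi.one_apply, sub_eq_zero, eq_comm, exp_neg_mul_tangent_eq_iff hκ]

end ProbabilityMeasure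

lemma isCompact_unitSq : IsCompact unitSq := isCompact_Icc.prod isCompact_Icc

instance : IsProbabilityMeasure (volume.restrict unitSq) := ⟨by
  rw [Measure.restrict_apply_univ, unitSq, Measure.volume_eq_prod, Measure.prod_prod,
    Real.volume_Icc]
  norm_num⟩

lemma unitSq_subset_closure_interior : unitSq ⊆ closure (interior unitSq) := by
  rw [unitSq, interior_prod_eq, interior_Icc, closure_prod_eq,
    closure_Ioo (zero_ne_one' ℝ)]

lemma ae_restrict_unitSq_eq_iff_eqOn {f g : ℝ × ℝ → ℝ} (hf : ContinuousOn f unitSq)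
    (hg : ContinuousOn g unitSq) :
    f =ᵐ[volume.restrict unitSq] g ↔ Set.EqOn f g unitSq :=
  ⟨fun h ↦ Measure.eqOn_of_ae_eq h hf hg unitSq_subset_closure_interior,
    fun h ↦ (ae_restrict_iff' (measurableSet_Icc.prod measurableSet_Icc)).2 (.of_forall h)⟩

theorem area_limit_maximized_by_uniform_general
    (κ : ℝ) (hκ : 0 < κ) (f : ℝ × ℝ → ℝ)
    (hf_cont : ContinuousOn f unitSq)
    (hf_prob : ∫ x in unitSq, f x = 1) :
    (∫ x in unitSq, (1 - Real.exp (-(κ * f x)))) ≤ 1 - Real.exp (-κ) ∧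
      ((∫ x in unitSq, (1 - Real.exp (-(κ * f x)))) = 1 - Real.exp (-κ) ↔
        ∀ x ∈ unitSq, f x = 1) := by
  have hf : IntegrableOn f unitSq := hf_cont.integrableOn_compact isCompact_unitSq
  have hexp : IntegrableOn (fun x ↦ exp (-(κ * f x))) unitSq :=
    ((hf_cont.const_smul κ).neg.rexp).integrableOn_compact isCompact_unitSq
  refine ⟨integral_one_sub_exp_neg_mul_le hf hf_prob hexp, ?_⟩
  rw [integral_one_sub_exp_neg_mul_eq_iff hκ.ne' hf hf_prob hexp]
  exact ae_restrict_unitSq_eq_iff_eqOn hf_cont continuousOn_const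

/-- For threshold `c = 1`, the limiting normalized area
`∫_{[0,1]²} (1 - e^{-κ f(x)}) dx` is at most `1 - e^{-κ}`, with equality if and only if
`f` is the uniform density on `[0,1]²`. -/
theorem area_limit_maximized_by_uniform
    (κ : ℝ) (hκ : 0 < κ) (f : ℝ × ℝ → ℝ)
    (hf_cont : ContinuousOn f unitSq)
    (hf_nonneg : ∀ x ∈ unitSq, 0 ≤ f x)
    (hf_prob : ∫ x in unitSq, f x = 1) :
    (∫ x in unitSq, (1 - Real.exp (-(κ * f x)))) ≤ 1 - Real.exp (-κ) ∧
      ((∫ x in unitSq, (1 - Real.exp (-(κ * f x)))) = 1 - Real.exp (-κ) ↔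
        ∀ x ∈ unitSq, f x = 1) :=
  area_limit_maximized_by_uniform_general κ hκ f hf_cont hf_prob
end
end
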